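/- arXiv:1901.01533 — 4 statements merged into one kernel-verified Lean document; each statement's English description precedes it below -/
import Mathlib

section
/- Let F : ℝ → ℝ be a continuous map such that F(x+1) = F(x) + d for all x ∈ ℝ, where d ≥ 2 is an integer. Assume that F has a periodic orbit P (the orbit of a periodic point) such that max P − min P > 1. Then for every integer m ≥ 1, F has a periodic point of exact period m, i.e., a point x with F^m(x) = x and F^i(x) ≠ x for 1 ≤ i ≤ m−1. -/
/-- `x` is a periodic point of `F` of exact period `m`. -/
def HasExactPeriod (F : ℝ → ℝ) (m : ℕ) (x : ℝ) : Prop :=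
  F^[m] x = x ∧ ∀ i, 1 ≤ i → i < m → F^[i] x ≠ x

namespace PeriodsAux

lemma uIcc_sub_Icc {c e u v : ℝ} (h1 : c ∈ Set.Icc u v) (h2 : e ∈ Set.Icc u v) :
    Set.uIcc c e ⊆ Set.Icc u v := by
  intro z hz
  rw [Set.mem_uIcc] at hz
  obtain ⟨h3, h4⟩ | ⟨h3, h4⟩ := hz
  · exact ⟨le_trans h1.1 h3, le_trans h4 h2.2⟩
  · exact ⟨le_trans h2.1 h3, le_trans h4 h1.2⟩

lemma Icc_min_max (s t : ℝ) : Set.Icc (min s t) (max s t) = Set.uIcc s t := by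
  rcases le_total s t with h | h
  · rw [min_eq_left h, max_eq_right h, Set.uIcc_of_le h]
  · rw [min_eq_right h, max_eq_left h, Set.uIcc_of_ge h]

/-- Exact pullback: if `F σ ≤ u ≤ v ≤ F τ` with `σ ≤ τ`, there is a subinterval
`[s,t]` on which `F` takes values exactly in `[u,v]` with endpoints hitting `u,v`. -/
lemma pull_le (F : ℝ → ℝ) (hF : Continuous F) (σ τ u v : ℝ) (hστ : σ ≤ τ)
    (huv : u ≤ v) (hσ : F σ ≤ u) (hτ : v ≤ F τ) :
    ∃ s t, σ ≤ s ∧ s ≤ t ∧ t ≤ τ ∧ F s = u ∧ F t = v ∧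
      ∀ z ∈ Set.Icc s t, F z ∈ Set.Icc u v := by
  classical
  set S : Set ℝ := Set.Icc σ τ ∩ {z | v ≤ F z} with hSdef
  have hSclosed : IsClosed S := isClosed_Icc.inter (isClosed_le continuous_const hF)
  have hSne : τ ∈ S := ⟨⟨hστ, le_refl τ⟩, hτ⟩
  have hSbdd : BddBelow S := ⟨σ, fun z hz => hz.1.1⟩
  set t₀ := sInf S with ht₀def
  have ht₀S : t₀ ∈ S := hSclosed.csInf_mem ⟨τ, hSne⟩ hSbdd
  have ht₀min : ∀ z ∈ S, t₀ ≤ z := fun z hz => csInf_le hSbdd hz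
  have ht₀v : v ≤ F t₀ := ht₀S.2
  have hσt₀ : σ ≤ t₀ := ht₀S.1.1
  have ht₀τ : t₀ ≤ τ := ht₀S.1.2
  set T2 : Set ℝ := Set.Icc σ t₀ ∩ {z | F z ≤ u} with hT2def
  have hT2closed : IsClosed T2 := isClosed_Icc.inter (isClosed_le hF continuous_const)
  have hT2ne : σ ∈ T2 := ⟨⟨le_refl σ, hσt₀⟩, hσ⟩
  have hT2bdd : BddAbove T2 := ⟨t₀, fun z hz => hz.1.2⟩
  set s₀ := sSup T2 with hs₀def
  have hs₀T2 : s₀ ∈ T2 := hT2closed.csSup_mem ⟨σ, hT2ne⟩ hT2bdd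
  have hs₀max : ∀ z ∈ T2, z ≤ s₀ := fun z hz => le_csSup hT2bdd hz
  have hσs₀ : σ ≤ s₀ := hs₀T2.1.1
  have hs₀t₀ : s₀ ≤ t₀ := hs₀T2.1.2
  have hs₀u : F s₀ ≤ u := hs₀T2.2
  -- F s₀ = u
  have key1 : F s₀ = u := by
    rcases eq_or_lt_of_le hs₀u with h | h
    · exact h
    · exfalso
      have hlt : s₀ < t₀ := by
        rcases eq_or_lt_of_le hs₀t₀ with he | he
        · exfalso; rw [he] at h; linarith
        · exact he
      obtain ⟨δ, hδpos, hδ⟩ := Metric.continuousAt_iff.mp hF.continuousAt (u - F s₀) (by linarith)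
      set z₀ := min (s₀ + δ / 2) t₀ with hz₀def
      have hz₀gt : s₀ < z₀ := lt_min (by linarith) hlt
      have hz₀le : z₀ ≤ t₀ := min_le_right _ _
      have hdist : dist z₀ s₀ < δ := by
        rw [Real.dist_eq, abs_of_pos (by linarith)]
        have : z₀ ≤ s₀ + δ / 2 := min_le_left _ _
        linarith
      have hFz₀ : F z₀ < u := by
        have := hδ hdist
        rw [Real.dist_eq] at this
        have := abs_lt.mp this
        linarith [this.2]
      have : z₀ ∈ T2 := ⟨⟨by linarith, hz₀le⟩, le_of_lt hFz₀⟩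
      exact absurd (hs₀max z₀ this) (not_le.mpr hz₀gt)
  -- F t₀ = v
  have key2 : F t₀ = v := by
    rcases eq_or_lt_of_le ht₀v with h | h
    · exact h.symm
    · exfalso
      have hlt : σ < t₀ := by
        rcases eq_or_lt_of_le hσt₀ with he | he
        · exfalso; rw [← he] at h; linarith
        · exact he
      obtain ⟨δ, hδpos, hδ⟩ := Metric.continuousAt_iff.mp hF.continuousAt (F t₀ - v) (by linarith)
      set z₁ := max (t₀ - δ / 2) σ with hz₁def
      have hz₁lt : z₁ < t₀ := max_lt (by linarith) hlt
      have hz₁ge : σ ≤ z₁ := le_max_right _ _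
      have hdist : dist z₁ t₀ < δ := by
        rw [Real.dist_eq, abs_of_nonpos (by linarith)]
        have : t₀ - δ / 2 ≤ z₁ := le_max_left _ _
        linarith
      have hFz₁ : v < F z₁ := by
        have := hδ hdist
        rw [Real.dist_eq] at this
        have := abs_lt.mp this
        linarith [this.1]
      have : z₁ ∈ S := ⟨⟨hz₁ge, le_trans (le_of_lt hz₁lt) ht₀τ⟩, le_of_lt hFz₁⟩
      exact absurd (ht₀min z₁ this) (not_le.mpr hz₁lt)
  refine ⟨s₀, t₀, hσs₀, hs₀t₀, ht₀τ, key1, key2, ?_⟩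
  intro z hz
  constructor
  · by_contra hcon
    push_neg at hcon
    have : z ∈ T2 := ⟨⟨le_trans hσs₀ hz.1, hz.2⟩, le_of_lt hcon⟩
    have hzs₀ : z ≤ s₀ := hs₀max z this
    have : z = s₀ := le_antisymm hzs₀ hz.1
    rw [this, key1] at hcon
    exact lt_irrefl u hcon
  · by_contra hcon
    push_neg at hcon
    have : z ∈ S := ⟨⟨le_trans hσs₀ hz.1, le_trans hz.2 ht₀τ⟩, le_of_lt hcon⟩
    have hzt₀ : t₀ ≤ z := ht₀min z this
    have : z = t₀ := le_antisymm hz.2 hzt₀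
    rw [this, key2] at hcon
    exact lt_irrefl v hcon

/-- Unordered-interval version of `pull_le`. -/
lemma pull (F : ℝ → ℝ) (hF : Continuous F) (σ τ u v : ℝ)
    (huv : u ≤ v) (hσ : F σ ≤ u) (hτ : v ≤ F τ) :
    ∃ s t, Set.uIcc s t ⊆ Set.uIcc σ τ ∧ F s = u ∧ F t = v ∧
      ∀ z ∈ Set.uIcc s t, F z ∈ Set.Icc u v := by
  rcases le_total σ τ with h | h
  · obtain ⟨s, t, h1, h2, h3, h4, h5, h6⟩ := pull_le F hF σ τ u v h huv hσ hτ
    refine ⟨s, t, ?_, h4, h5, ?_⟩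
    · rw [Set.uIcc_of_le h2, Set.uIcc_of_le h]
      exact Set.Icc_subset_Icc h1 h3
    · intro z hz
      rw [Set.uIcc_of_le h2] at hz
      exact h6 z hz
  · -- τ ≤ σ : apply the previous case to `F ∘ neg`
    obtain ⟨s, t, h1, h2, h3, h4, h5, h6⟩ :=
      pull_le (fun z => F (-z)) (hF.comp continuous_neg) (-σ) (-τ) u v
        (by linarith) huv (by simpa using hσ) (by simpa using hτ)
    refine ⟨-s, -t, ?_, by simpa using h4, by simpa using h5, ?_⟩
    · have hts : -t ≤ -s := by linarith
      rw [Set.uIcc_of_ge (by linarith : -t ≤ -s), Set.uIcc_of_ge h]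
      exact Set.Icc_subset_Icc (by linarith) (by linarith)
    · intro z hz
      rw [Set.uIcc_of_ge (by linarith : -t ≤ -s)] at hz
      have : -z ∈ Set.Icc s t := ⟨by linarith [hz.2], by linarith [hz.1]⟩
      simpa using h6 (-z) this

/-- The horseshoe lemma: two disjoint compact intervals `I = [i₁,i₂]`, `J = [j₁,j₂]`
(`I` to the left of `J`), such that `F(I) ⊇ J` and `F(J) ⊇ [i₁, j₂] ⊇ I ∪ J`,
witnessed by marked points.  Then `F` has points of all exact periods. -/
lemma horseshoe (F : ℝ → ℝ) (hF : Continuous F) (i₁ i₂ j₁ j₂ σI τI σJ τJ : ℝ)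
    (hii : i₁ ≤ i₂) (hij : i₂ < j₁) (hjj : j₁ ≤ j₂)
    (mσI : σI ∈ Set.Icc i₁ i₂) (mτI : τI ∈ Set.Icc i₁ i₂)
    (mσJ : σJ ∈ Set.Icc j₁ j₂) (mτJ : τJ ∈ Set.Icc j₁ j₂)
    (hσI : F σI ≤ j₁) (hτI : j₂ ≤ F τI)
    (hσJ : F σJ ≤ i₁) (hτJ : j₂ ≤ F τJ) :
    ∀ m : ℕ, 1 ≤ m → ∃ y, HasExactPeriod F m y := by
  intro m hm
  have hJsub : Set.uIcc σJ τJ ⊆ Set.Icc j₁ j₂ := uIcc_sub_Icc mσJ mτJ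
  have hIsub : Set.uIcc σI τI ⊆ Set.Icc i₁ i₂ := uIcc_sub_Icc mσI mτI
  rcases eq_or_lt_of_le hm with h1 | h2
  · -- m = 1 : a fixed point inside J
    set g : ℝ → ℝ := fun z => F z - z with hgdef
    have hg : Continuous g := hF.sub continuous_id
    have hgσ : g σJ ≤ 0 := by
      simp only [hgdef]
      have := mσJ.1; linarith
    have hgτ : 0 ≤ g τJ := by
      simp only [hgdef]
      have := mτJ.2; linarith
    have h0 : (0 : ℝ) ∈ Set.uIcc (g σJ) (g τJ) := by
      rw [Set.mem_uIcc]; left; exact ⟨hgσ, hgτ⟩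
    obtain ⟨y, hy, hgy⟩ := intermediate_value_uIcc hg.continuousOn h0
    simp only [hgdef] at hgy
    refine ⟨y, ?_, ?_⟩
    · rw [← h1]
      simp only [Function.iterate_one]
      linarith
    · intro i hi1 hi2
      rw [← h1] at hi2
      omega
  · -- 2 ≤ m
    have good : ∀ r : ℕ, 1 ≤ r → ∃ s t : ℝ,
        s ∈ Set.Icc j₁ j₂ ∧ t ∈ Set.Icc j₁ j₂ ∧
        (∀ z ∈ Set.uIcc s t, ∀ j : ℕ, j < r → F^[j] z ∈ Set.Icc j₁ j₂) ∧
        F^[r] s = i₁ ∧ F^[r] t = i₂ := by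
      intro r hr
      induction r, hr using Nat.le_induction with
      | base =>
        obtain ⟨s, t, hsub, hFs, hFt, hctrl⟩ :=
          pull F hF σJ τJ i₁ i₂ hii hσJ (by linarith)
        have hsubJ : Set.uIcc s t ⊆ Set.Icc j₁ j₂ := fun z hz => hJsub (hsub hz)
        refine ⟨s, t, hsubJ Set.left_mem_uIcc, hsubJ Set.right_mem_uIcc, ?_, ?_, ?_⟩
        · intro z hz j hj
          interval_cases j
          simpa using hsubJ hz
        · simpa using hFs
        · simpa using hFt
      | succ r hr ih =>
        obtain ⟨s, t, hsJ, htJ, hctrl, hFs, hFt⟩ := ih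
        obtain ⟨s', t', hsub', hFs', hFt', hctrl'⟩ :=
          pull F hF σJ τJ (min s t) (max s t)
            (min_le_max)
            (le_trans hσJ (le_trans (by linarith : i₁ ≤ j₁) (le_min hsJ.1 htJ.1)))
            (le_trans (max_le hsJ.2 htJ.2) hτJ)
        have hsub'J : Set.uIcc s' t' ⊆ Set.Icc j₁ j₂ := fun z hz => hJsub (hsub' hz)
        have hctrl'' : ∀ z ∈ Set.uIcc s' t', F z ∈ Set.uIcc s t := by
          intro z hz
          rw [← Icc_min_max]
          exact hctrl' z hz
        have hstep : ∀ z ∈ Set.uIcc s' t', ∀ j : ℕ, j < r + 1 → F^[j] z ∈ Set.Icc j₁ j₂ := by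
          intro z hz j hj
          rcases Nat.eq_zero_or_pos j with h0 | hpos
          · subst h0; simpa using hsub'J hz
          · obtain ⟨j', rfl⟩ : ∃ j', j = j' + 1 := ⟨j - 1, by omega⟩
            rw [Function.iterate_succ_apply]
            exact hctrl (F z) (hctrl'' z hz) j' (by omega)
        rcases le_total s t with hst | hst
        · refine ⟨s', t', hsub'J Set.left_mem_uIcc, hsub'J Set.right_mem_uIcc, hstep, ?_, ?_⟩
          · rw [Function.iterate_succ_apply, hFs', min_eq_left hst, hFs]
          · rw [Function.iterate_succ_apply, hFt', max_eq_right hst, hFt]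
        · refine ⟨t', s', hsub'J Set.right_mem_uIcc, hsub'J Set.left_mem_uIcc, ?_, ?_, ?_⟩
          · intro z hz; exact hstep z (by rwa [Set.uIcc_comm] at hz)
          · rw [Function.iterate_succ_apply, hFt', max_eq_left hst, hFs]
          · rw [Function.iterate_succ_apply, hFs', min_eq_right hst, hFt]
    obtain ⟨s, t, hsJ, htJ, hctrl, hFs, hFt⟩ := good (m - 1) (by omega)
    obtain ⟨s₀, t₀, hsub₀, hFs₀, hFt₀, hctrl₀⟩ :=
      pull F hF σI τI (min s t) (max s t) min_le_max
        (le_trans hσI (le_min hsJ.1 htJ.1))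
        (le_trans (max_le hsJ.2 htJ.2) hτI)
    have hsub₀I : Set.uIcc s₀ t₀ ⊆ Set.Icc i₁ i₂ := fun z hz => hIsub (hsub₀ hz)
    have hctrl₀' : ∀ z ∈ Set.uIcc s₀ t₀, F z ∈ Set.uIcc s t := by
      intro z hz; rw [← Icc_min_max]; exact hctrl₀ z hz
    -- pick endpoints α, β with F^[m] α = i₁, F^[m] β = i₂
    have hm1 : m - 1 + 1 = m := by omega
    have key : ∃ α β, Set.uIcc α β = Set.uIcc s₀ t₀ ∧ F^[m] α = i₁ ∧ F^[m] β = i₂ := by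
      rcases le_total s t with hst | hst
      · refine ⟨s₀, t₀, rfl, ?_, ?_⟩
        · rw [← hm1, Function.iterate_succ_apply, hFs₀, min_eq_left hst, hFs]
        · rw [← hm1, Function.iterate_succ_apply, hFt₀, max_eq_right hst, hFt]
      · refine ⟨t₀, s₀, Set.uIcc_comm _ _, ?_, ?_⟩
        · rw [← hm1, Function.iterate_succ_apply, hFt₀, max_eq_left hst, hFs]
        · rw [← hm1, Function.iterate_succ_apply, hFs₀, min_eq_right hst, hFt]
    obtain ⟨α, β, hαβ, hFα, hFβ⟩ := key
    have hαI : α ∈ Set.Icc i₁ i₂ := hsub₀I (hαβ ▸ Set.left_mem_uIcc)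
    have hβI : β ∈ Set.Icc i₁ i₂ := hsub₀I (hαβ ▸ Set.right_mem_uIcc)
    set g : ℝ → ℝ := fun z => F^[m] z - z with hgdef
    have hg : Continuous g := (hF.iterate m).sub continuous_id
    have hgα : g α ≤ 0 := by
      simp only [hgdef]; rw [hFα]; linarith [hαI.1]
    have hgβ : 0 ≤ g β := by
      simp only [hgdef]; rw [hFβ]; linarith [hβI.2]
    have h0 : (0 : ℝ) ∈ Set.uIcc (g α) (g β) := by
      rw [Set.mem_uIcc]; left; exact ⟨hgα, hgβ⟩
    obtain ⟨y, hy, hgy⟩ := intermediate_value_uIcc hg.continuousOn h0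
    simp only [hgdef] at hgy
    have hyfix : F^[m] y = y := by linarith
    have hyI : y ∈ Set.Icc i₁ i₂ := hsub₀I (hαβ ▸ hy)
    refine ⟨y, hyfix, ?_⟩
    intro i hi1 hi2
    obtain ⟨j, rfl⟩ : ∃ j, i = j + 1 := ⟨i - 1, by omega⟩
    have hFy : F y ∈ Set.uIcc s t := hctrl₀' y (hαβ ▸ hy)
    have : F^[j] (F y) ∈ Set.Icc j₁ j₂ := hctrl (F y) hFy j (by omega)
    rw [Function.iterate_succ_apply]
    intro hcon
    rw [hcon] at this
    have := this.1
    have := hyI.2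
    linarith

lemma lift_nat (F : ℝ → ℝ) (d : ℤ) (hlift : ∀ x, F (x + 1) = F x + d) :
    ∀ (j : ℕ) (y : ℝ), F (y + j) = F y + j * (d : ℝ) := by
  intro j
  induction j with
  | zero => intro y; simp
  | succ j ih =>
    intro y
    have h1 : (y + (j + 1 : ℕ) : ℝ) = (y + j) + 1 := by push_cast; ring
    rw [h1, hlift, ih]
    push_cast
    ring

/-- A crossing pair `Q < P` with `F Q ≥ P`, `F P ≤ Q`, and the up-jump at least 1 deep,
yields points of all exact periods. -/
lemma downup (F : ℝ → ℝ) (hF : Continuous F) (d : ℤ) (hd : 2 ≤ d)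
    (hlift : ∀ x, F (x + 1) = F x + d) (Q P : ℝ) (hQP : Q < P)
    (h1 : P ≤ F Q) (h2 : F P ≤ Q) (h3 : Q + 1 ≤ F Q) :
    ∀ m : ℕ, 1 ≤ m → ∃ y, HasExactPeriod F m y := by
  have hd2 : (2 : ℝ) ≤ (d : ℝ) := by exact_mod_cast hd
  set k : ℕ := ⌊P - Q⌋₊ with hk
  have hPQpos : 0 ≤ P - Q := by linarith
  have hfl : (k : ℝ) ≤ P - Q := Nat.floor_le hPQpos
  have hfl2 : P - Q < k + 1 := Nat.lt_floor_add_one (P - Q)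
  rcases Nat.eq_zero_or_pos k with hk0 | hkpos
  · -- Q < P < Q + 1
    have hPQ1 : P < Q + 1 := by
      rw [hk0] at hfl2; push_cast at hfl2; linarith
    -- a point P₁ ∈ [Q, P) with F P₁ = P
    have hmem : P ∈ Set.uIcc (F Q) (F P) := by
      rw [Set.uIcc_of_ge (by linarith : F P ≤ F Q)]
      exact ⟨by linarith, h1⟩
    obtain ⟨P₁, hP₁mem, hP₁⟩ := intermediate_value_uIcc hF.continuousOn hmem
    rw [Set.uIcc_of_le (le_of_lt hQP)] at hP₁mem
    have hP₁P : P₁ < P := by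
      rcases eq_or_lt_of_le hP₁mem.2 with h | h
      · exfalso; rw [h] at hP₁; rw [hP₁] at h2; linarith
      · exact h
    have hFQ1 : F (Q + 1) = F Q + d := hlift Q
    exact horseshoe F hF Q P₁ P (Q + 1) P₁ Q P (Q + 1)
      hP₁mem.1 hP₁P (by linarith)
      ⟨hP₁mem.1, le_refl _⟩ ⟨le_refl _, hP₁mem.1⟩
      ⟨le_refl _, by linarith⟩ ⟨by linarith, le_refl _⟩
      (le_of_eq hP₁) h3 h2 (by rw [hFQ1]; linarith)
  · -- k ≥ 1 : Q + k < P < Q + k + 1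
    have hkR : (1 : ℝ) ≤ (k : ℝ) := by exact_mod_cast hkpos
    have hFQk : F (Q + k) = F Q + k * d := lift_nat F d hlift k Q
    have hQkP : Q + (k : ℝ) < P := by
      rcases eq_or_lt_of_le hfl with h | h
      · exfalso
        have hPval : P = Q + (k : ℝ) := by linarith
        rw [← hPval] at hFQk
        have : P + (k : ℝ) * d ≤ F P := by
          rw [hFQk]
          have : (0:ℝ) ≤ (k : ℝ) * d := by positivity
          nlinarith
        nlinarith
      · linarith
    have hkm1 : F (Q + ((k : ℝ) - 1)) = F Q + ((k : ℝ) - 1) * d := by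
      obtain ⟨k', hk'⟩ : ∃ k', k = k' + 1 := ⟨k - 1, by omega⟩
      have h5 := lift_nat F d hlift k' Q
      have hcast : ((k' : ℝ)) = (k : ℝ) - 1 := by rw [hk']; push_cast; ring
      rw [← hcast]
      exact h5
    have hFP1 : F P = F (P - 1) + d := by
      have := hlift (P - 1)
      simpa using this
    exact horseshoe F hF (Q + (k : ℝ) - 1) (P - 1) (Q + (k : ℝ)) P
      (P - 1) (Q + (k : ℝ) - 1) P (Q + (k : ℝ))
      (by linarith) (by linarith) (by linarith)
      ⟨by linarith, le_refl _⟩ ⟨le_refl _, by linarith⟩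
      ⟨by linarith, le_refl _⟩ ⟨le_refl _, by linarith⟩
      (by -- F (P-1) = F P - d ≤ Q - d ≤ Q + k
        have : F (P - 1) = F P - d := by linarith [hFP1]
        rw [this]; linarith)
      (by -- P ≤ F (Q + k - 1) = F Q + (k-1) d
        have : Q + (k : ℝ) - 1 = Q + ((k : ℝ) - 1) := by ring
        rw [this, hkm1]
        nlinarith)
      (by linarith)
      (by rw [hFQk]; nlinarith)

lemma iter_mod (F : ℝ → ℝ) (x : ℝ) (n : ℕ) (hn : 0 < n) (hper : F^[n] x = x) :
    ∀ i, F^[i] x = F^[i % n] x := by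
  intro i
  induction i using Nat.strong_induction_on with
  | _ i ih =>
    by_cases h : i < n
    · rw [Nat.mod_eq_of_lt h]
    · push_neg at h
      have h2 : F^[i] x = F^[i - n] x := by
        conv_lhs => rw [show i = (i - n) + n by omega]
        rw [Function.iterate_add_apply, hper]
      rw [h2, ih (i - n) (by omega), Nat.mod_eq_sub_mod h]

end PeriodsAux

open PeriodsAux in
/-- If `F` is a lifting of a circle map of degree `d ≥ 2` and `F` has a periodic orbit
`P` with `max P - min P > 1`, then `F` has periodic points of all exact periods. -/
theorem periods_of_degree_ge_two_lifting_with_large_orbit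
    (F : ℝ → ℝ) (hF : Continuous F) (d : ℤ) (hd : 2 ≤ d)
    (hlift : ∀ x, F (x + 1) = F x + d)
    (x : ℝ) (n : ℕ) (hn : 1 ≤ n) (hper : F^[n] x = x)
    (hbig : sSup (Set.range fun i : ℕ => F^[i] x) -
            sInf (Set.range fun i : ℕ => F^[i] x) > 1) :
    ∀ m : ℕ, 1 ≤ m → ∃ y : ℝ, HasExactPeriod F m y := by
  classical
  set T : Finset ℝ := (Finset.range n).image (fun i => F^[i] x) with hT
  have hTmem : ∀ i : ℕ, F^[i] x ∈ T := by
    intro i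
    rw [iter_mod F x n (by omega) hper i]
    exact Finset.mem_image.mpr ⟨i % n, Finset.mem_range.mpr (Nat.mod_lt _ (by omega)), rfl⟩
  have hne : T.Nonempty := ⟨x, by simpa using hTmem 0⟩
  set a := T.min' hne with ha
  set b := T.max' hne with hb
  have hrange : Set.range (fun i : ℕ => F^[i] x) = (T : Set ℝ) := by
    ext z
    constructor
    · rintro ⟨i, rfl⟩
      exact Finset.mem_coe.mpr (hTmem i)
    · intro hz
      obtain ⟨i, _, hi⟩ := Finset.mem_image.mp (Finset.mem_coe.mp hz)
      exact ⟨i, hi⟩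
  have hsup : sSup (Set.range fun i : ℕ => F^[i] x) = b := by
    rw [hrange]; exact hne.csSup_eq_max'
  have hinf : sInf (Set.range fun i : ℕ => F^[i] x) = a := by
    rw [hrange]; exact hne.csInf_eq_min'
  rw [hsup, hinf] at hbig
  -- basic facts
  have hmemF : ∀ t ∈ T, F t ∈ T := by
    intro t ht
    obtain ⟨i, _, rfl⟩ := Finset.mem_image.mp ht
    have : F (F^[i] x) = F^[i + 1] x := (Function.iterate_succ_apply' F i x).symm
    rw [this]
    exact hTmem (i + 1)
  have haT : a ∈ T := T.min'_mem hne
  have hbT : b ∈ T := T.max'_mem hne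
  have hFa : a ≤ F a := T.min'_le _ (hmemF a haT)
  -- choose k
  obtain ⟨k, hk1, hklt, hk2⟩ : ∃ k : ℕ, 1 ≤ k ∧ (k : ℝ) < b - a ∧ b - a ≤ 2 * k := by
    by_cases h2 : b - a ≤ 2
    · exact ⟨1, le_refl _, by push_cast; linarith, by push_cast; linarith⟩
    · push_neg at h2
      set c := ⌈b - a⌉₊ with hc
      have hc1 : b - a ≤ c := Nat.le_ceil _
      have hc2 : (c : ℝ) < (b - a) + 1 := Nat.ceil_lt_add_one (by linarith)
      have hc3 : 3 ≤ c := by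
        have h4 : (2 : ℝ) < (c : ℝ) := by linarith
        have h5 : 2 < c := by exact_mod_cast h4
        omega
      refine ⟨c - 1, by omega, ?_, ?_⟩
      · have : ((c - 1 : ℕ) : ℝ) = (c : ℝ) - 1 := by
          push_cast [Nat.cast_sub (by omega : 1 ≤ c)]; ring
        rw [this]; linarith
      · have : ((c - 1 : ℕ) : ℝ) = (c : ℝ) - 1 := by
          push_cast [Nat.cast_sub (by omega : 1 ≤ c)]; ring
        rw [this]
        have : (3 : ℝ) ≤ (c : ℝ) := by exact_mod_cast hc3
        linarith
  set θ := a + (k : ℝ) with hθ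
  have hθa : a < θ := by
    have : (1 : ℝ) ≤ (k : ℝ) := by exact_mod_cast hk1
    simp only [hθ]; linarith
  have hθb : θ < b := by simp only [hθ]; linarith
  -- crossing point V
  obtain ⟨V, hVT, hVθ, hFVθ⟩ : ∃ V, V ∈ T ∧ θ < V ∧ F V ≤ θ := by
    by_contra hc
    push_neg at hc
    obtain ⟨i₀, hi₀r, hbi⟩ := Finset.mem_image.mp hbT
    obtain ⟨j₀, hj₀r, haj⟩ := Finset.mem_image.mp haT
    have hi₀ : i₀ < n := Finset.mem_range.mp hi₀r
    have hiter : ∀ j : ℕ, θ < F^[j] b ∧ F^[j] b ∈ T := by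
      intro j
      induction j with
      | zero => exact ⟨by simpa using hθb, by simpa using hbT⟩
      | succ j ih =>
        rw [Function.iterate_succ_apply']
        exact ⟨hc _ ih.2 ih.1, hmemF _ ih.2⟩
    have hab : a = F^[j₀ + (n - i₀)] b := by
      rw [← hbi, ← Function.iterate_add_apply]
      have : j₀ + (n - i₀) + i₀ = j₀ + n := by omega
      rw [this, Function.iterate_add_apply, hper, haj]
    have := (hiter (j₀ + (n - i₀))).1
    rw [← hab] at this
    linarith
  have hVb : V ≤ b := T.le_max' V hVT
  -- apply downup with Q := θ, P := V
  have hd2 : (2 : ℝ) ≤ (d : ℝ) := by exact_mod_cast hd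
  have hkd : (k : ℝ) * 2 ≤ (k : ℝ) * d := by
    have : (0 : ℝ) ≤ (k : ℝ) := Nat.cast_nonneg _
    nlinarith
  have hFθ : F θ = F a + (k : ℝ) * d := lift_nat F d hlift k a
  have hk1R : (1 : ℝ) ≤ (k : ℝ) := by exact_mod_cast hk1
  have hup1 : θ + 1 ≤ F θ := by
    rw [hFθ]; simp only [hθ]; nlinarith
  have hup2 : V ≤ F θ := by
    rw [hFθ]
    have : b ≤ a + (k : ℝ) * d := by nlinarith
    linarith
  exact downup F hF d hd hlift θ V hVθ hup2 hFVθ hup1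
end

section
/- Let F : ℝ → ℝ be a continuous map such that F(x+1) = F(x) + 1 for all x ∈ ℝ. Assume that F has a periodic orbit P such that max P − min P > 1. Then for every integer m ≥ 1, F has a periodic point of exact period m, i.e., a point x with F^m(x) = x and F^i(x) ≠ x for 1 ≤ i ≤ m−1. -/
set_option linter.unusedVariables false

section CircleLift

theorem lift_int {F : ℝ → ℝ} (hlift : ∀ x, F (x + 1) = F x + 1) (k : ℤ) (x : ℝ) :
    F (x + k) = F x + k := by
  induction k using Int.induction_on with
  | zero => simp
  | succ n ih =>
      have h : (x : ℝ) + ((n : ℤ) + 1 : ℤ) = (x + (n : ℤ)) + 1 := by push_cast; ring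
      rw [h, hlift, ih]; push_cast; ring
  | pred n ih =>
      have h1 : (x : ℝ) + ((-(n:ℤ) - 1 : ℤ) : ℝ) + 1 = x + ((-(n:ℤ) : ℤ) : ℝ) := by
        push_cast; ring
      have h2 := hlift (x + ((-(n:ℤ) - 1 : ℤ) : ℝ))
      rw [h1, ih] at h2
      push_cast at h2 ⊢
      linarith

theorem bound_above {F : ℝ → ℝ} (hF : Continuous F) (hlift : ∀ x, F (x + 1) = F x + 1) :
    ∃ C : ℝ, 0 ≤ C ∧ (∀ x, F x - x ≤ C) ∧ (∀ x, -C ≤ F x - x) := by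
  have hc : IsCompact (Set.Icc (0:ℝ) 1) := isCompact_Icc
  have hcont : ContinuousOn (fun x => F x - x) (Set.Icc (0:ℝ) 1) :=
    (hF.sub continuous_id).continuousOn
  obtain ⟨a, _, ha⟩ := hc.exists_isMaxOn ⟨0, by norm_num⟩ hcont
  obtain ⟨b, _, hb⟩ := hc.exists_isMinOn ⟨0, by norm_num⟩ hcont
  set C1 := F a - a with hC1
  set C2 := F b - b with hC2
  have key : ∀ x : ℝ, C2 ≤ F x - x ∧ F x - x ≤ C1 := by
    intro x
    have hx : x - ⌊x⌋ ∈ Set.Icc (0:ℝ) 1 := by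
      constructor
      · linarith [Int.floor_le x]
      · linarith [Int.lt_floor_add_one x]
    have heq : F x - x = F (x - ⌊x⌋) - (x - ⌊x⌋) := by
      have h3 := lift_int hlift ⌊x⌋ (x - ⌊x⌋)
      have h2 : x - (⌊x⌋:ℝ) + (⌊x⌋:ℝ) = x := by ring
      rw [h2] at h3
      linarith
    rw [heq]
    exact ⟨hb hx, ha hx⟩
  refine ⟨max C1 (max (-C2) 0), le_max_of_le_right (le_max_right _ _), ?_, ?_⟩
  · intro x; exact le_trans (key x).2 (le_max_left _ _)
  · intro x
    have h := (key x).1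
    have h2 : -C2 ≤ max C1 (max (-C2) 0) := le_max_of_le_right (le_max_left _ _)
    linarith

theorem pullback {g : ℝ → ℝ} (hg : Continuous g) {e f A B : ℝ} (hef : e ≤ f) (hAB : A ≤ B)
    (h1 : g e ≤ A) (h2 : B ≤ g f) :
    ∃ e' f', e ≤ e' ∧ e' ≤ f' ∧ f' ≤ f ∧ g e' = A ∧ g f' = B ∧
      ∀ x, e' ≤ x → x ≤ f' → A ≤ g x ∧ g x ≤ B := by
  have hSne : ∃ z ∈ Set.Icc e f, g z = B := by
    have : B ∈ Set.Icc (g e) (g f) := ⟨le_trans h1 hAB, h2⟩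
    obtain ⟨z, hz, hgz⟩ := intermediate_value_Icc hef hg.continuousOn this
    exact ⟨z, hz, hgz⟩
  set S : Set ℝ := {z | z ∈ Set.Icc e f ∧ g z = B} with hS
  have hSclosed : IsClosed S := by
    have : S = Set.Icc e f ∩ g ⁻¹' {B} := by
      ext z; simp [hS, Set.mem_inter_iff]
    rw [this]
    exact isClosed_Icc.inter (isClosed_singleton.preimage hg)
  have hSne' : S.Nonempty := by obtain ⟨z, hz, hgz⟩ := hSne; exact ⟨z, hz, hgz⟩
  have hSbdd : BddBelow S := ⟨e, fun z hz => hz.1.1⟩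
  set f' := sInf S with hf'
  have hf'S : f' ∈ S := hSclosed.csInf_mem hSne' hSbdd
  have hgf' : g f' = B := hf'S.2
  have hef' : e ≤ f' := hf'S.1.1
  have hf'f : f' ≤ f := hf'S.1.2
  have hTne : ∃ z ∈ Set.Icc e f', g z = A := by
    have : A ∈ Set.Icc (g e) (g f') := ⟨h1, by rw [hgf']; exact hAB⟩
    obtain ⟨z, hz, hgz⟩ := intermediate_value_Icc hef' hg.continuousOn this
    exact ⟨z, hz, hgz⟩
  set T : Set ℝ := {z | z ∈ Set.Icc e f' ∧ g z = A} with hT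
  have hTclosed : IsClosed T := by
    have : T = Set.Icc e f' ∩ g ⁻¹' {A} := by
      ext z; simp [hT, Set.mem_inter_iff]
    rw [this]
    exact isClosed_Icc.inter (isClosed_singleton.preimage hg)
  have hTne' : T.Nonempty := by obtain ⟨z, hz, hgz⟩ := hTne; exact ⟨z, hz, hgz⟩
  have hTbdd : BddAbove T := ⟨f', fun z hz => hz.1.2⟩
  set e' := sSup T with he'
  have he'T : e' ∈ T := hTclosed.csSup_mem hTne' hTbdd
  have hge' : g e' = A := he'T.2
  have hee' : e ≤ e' := he'T.1.1
  have he'f' : e' ≤ f' := he'T.1.2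
  refine ⟨e', f', hee', he'f', hf'f, hge', hgf', ?_⟩
  intro z hz1 hz2
  constructor
  · by_contra hlt
    push_neg at hlt
    have hze' : e' < z := by
      rcases lt_or_eq_of_le hz1 with h | h
      · exact h
      · exfalso; rw [← h, hge'] at hlt; exact lt_irrefl A hlt
    have : A ∈ Set.Icc (g z) (g f') := ⟨le_of_lt hlt, by rw [hgf']; exact hAB⟩
    obtain ⟨w, hw, hgw⟩ := intermediate_value_Icc hz2 hg.continuousOn this
    have hwT : w ∈ T := ⟨⟨le_trans hee' (le_trans (le_of_lt hze') hw.1), hw.2⟩, hgw⟩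
    have : w ≤ e' := le_csSup hTbdd hwT
    have : z ≤ e' := le_trans hw.1 this
    exact absurd this (not_le.mpr hze')
  · by_contra hlt
    push_neg at hlt
    have hzf' : z < f' := by
      rcases lt_or_eq_of_le hz2 with h | h
      · exact h
      · exfalso; rw [h, hgf'] at hlt; exact lt_irrefl B hlt
    have : B ∈ Set.Icc (g e') (g z) := ⟨by rw [hge']; exact hAB, le_of_lt hlt⟩
    obtain ⟨w, hw, hgw⟩ := intermediate_value_Icc hz1 hg.continuousOn this
    have hwS : w ∈ S := ⟨⟨le_trans hee' hw.1, le_trans hw.2 (le_trans (le_of_lt hzf') hf'f)⟩, hgw⟩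
    have : f' ≤ w := csInf_le hSbdd hwS
    have : f' ≤ z := le_trans this hw.2
    exact absurd this (not_le.mpr hzf')

theorem pullback' {g : ℝ → ℝ} (hg : Continuous g) {e f A B : ℝ} (hef : e ≤ f) (hAB : A ≤ B)
    (h1 : B ≤ g e) (h2 : g f ≤ A) :
    ∃ e' f', e ≤ e' ∧ e' ≤ f' ∧ f' ≤ f ∧ g e' = B ∧ g f' = A ∧
      ∀ x, e' ≤ x → x ≤ f' → A ≤ g x ∧ g x ≤ B := by
  obtain ⟨e', f', he, hef', hf, hA, hB, hbound⟩ :=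
    pullback (g := fun x => A + B - g x) (by continuity) hef hAB
      (by simp; linarith) (by show B ≤ A + B - g f; linarith)
  refine ⟨e', f', he, hef', hf, by linarith [hA], by linarith [hB], ?_⟩
  intro z h1' h2'
  have := hbound z h1' h2'
  constructor <;> linarith [this.1, this.2]



theorem loop_theorem {F : ℝ → ℝ} (hF : Continuous F) {a c : ℝ} (hac : a ≤ c)
    (m : ℕ) (hm : 1 ≤ m) (l u : ℕ → ℝ)
    (hl : ∀ i, i ≤ m → a ≤ l i) (hlu : ∀ i, i ≤ m → l i ≤ u i) (hu : ∀ i, i ≤ m → u i ≤ c)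
    (hcyc_l : l m = l 0) (hcyc_u : u m = u 0)
    (hcov : ∀ i, i < m → (F (l i) ≤ a ∧ c ≤ F (u i)) ∨ (c ≤ F (l i) ∧ F (u i) ≤ a)) :
    ∃ y, F^[m] y = y ∧ ∀ i, i ≤ m → l i ≤ F^[i] y ∧ F^[i] y ≤ u i := by
  have key : ∀ i, i ≤ m → ∃ e f, e ≤ f ∧
      (∀ j, j ≤ i → ∀ z, e ≤ z → z ≤ f → l j ≤ F^[j] z ∧ F^[j] z ≤ u j) ∧
      ((F^[i] e = l i ∧ F^[i] f = u i) ∨ (F^[i] e = u i ∧ F^[i] f = l i)) := by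
    intro i
    induction i with
    | zero =>
        intro _
        refine ⟨l 0, u 0, hlu 0 (by omega), ?_, Or.inl ⟨rfl, rfl⟩⟩
        intro j hj z hz1 hz2
        interval_cases j
        simpa using ⟨hz1, hz2⟩
    | succ i ih =>
        intro hi
        obtain ⟨e, f, hef, hbounds, hend⟩ := ih (by omega)
        have hgc : Continuous (F^[i+1]) := hF.iterate _
        have hAB : l (i+1) ≤ u (i+1) := hlu _ hi
        have hiter : ∀ z, F^[i+1] z = F (F^[i] z) := by
          intro z; rw [Function.iterate_succ_apply' F i z]
        have hstep : ∃ e' f', e ≤ e' ∧ e' ≤ f' ∧ f' ≤ f ∧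
            ((F^[i+1] e' = l (i+1) ∧ F^[i+1] f' = u (i+1)) ∨
             (F^[i+1] e' = u (i+1) ∧ F^[i+1] f' = l (i+1))) ∧
            ∀ z, e' ≤ z → z ≤ f' → l (i+1) ≤ F^[i+1] z ∧ F^[i+1] z ≤ u (i+1) := by
          rcases hend with ⟨he1, hf1⟩ | ⟨he1, hf1⟩ <;>
            rcases hcov i (by omega) with ⟨hc1, hc2⟩ | ⟨hc1, hc2⟩
          · -- e ↦ l i, F(l i) ≤ a : increasing orientation
            have h1 : F^[i+1] e ≤ l (i+1) := by
              rw [hiter, he1]; exact le_trans hc1 (hl _ hi)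
            have h2 : u (i+1) ≤ F^[i+1] f := by
              rw [hiter, hf1]; exact le_trans (hu _ hi) hc2
            obtain ⟨e', f', h3, h4, h5, h6, h7, h8⟩ := pullback hgc hef hAB h1 h2
            exact ⟨e', f', h3, h4, h5, Or.inl ⟨h6, h7⟩, h8⟩
          · have h1 : u (i+1) ≤ F^[i+1] e := by
              rw [hiter, he1]; exact le_trans (hu _ hi) hc1
            have h2 : F^[i+1] f ≤ l (i+1) := by
              rw [hiter, hf1]; exact le_trans hc2 (hl _ hi)
            obtain ⟨e', f', h3, h4, h5, h6, h7, h8⟩ := pullback' hgc hef hAB h1 h2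
            exact ⟨e', f', h3, h4, h5, Or.inr ⟨h6, h7⟩, h8⟩
          · have h1 : u (i+1) ≤ F^[i+1] e := by
              rw [hiter, he1]; exact le_trans (hu _ hi) hc2
            have h2 : F^[i+1] f ≤ l (i+1) := by
              rw [hiter, hf1]; exact le_trans hc1 (hl _ hi)
            obtain ⟨e', f', h3, h4, h5, h6, h7, h8⟩ := pullback' hgc hef hAB h1 h2
            exact ⟨e', f', h3, h4, h5, Or.inr ⟨h6, h7⟩, h8⟩
          · have h1 : F^[i+1] e ≤ l (i+1) := by
              rw [hiter, he1]; exact le_trans hc2 (hl _ hi)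
            have h2 : u (i+1) ≤ F^[i+1] f := by
              rw [hiter, hf1]; exact le_trans (hu _ hi) hc1
            obtain ⟨e', f', h3, h4, h5, h6, h7, h8⟩ := pullback hgc hef hAB h1 h2
            exact ⟨e', f', h3, h4, h5, Or.inl ⟨h6, h7⟩, h8⟩
        obtain ⟨e', f', h3, h4, h5, hend', hbnd'⟩ := hstep
        refine ⟨e', f', h4, ?_, hend'⟩
        intro j hj z hz1 hz2
        rcases Nat.lt_or_ge j (i+1) with h | h
        · exact hbounds j (by omega) z (le_trans h3 hz1) (le_trans hz2 h5)
        · have : j = i + 1 := by omega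
          subst this
          exact hbnd' z hz1 hz2
  obtain ⟨e, f, hef, hbounds, hend⟩ := key m (le_refl m)
  have he0 : l 0 ≤ e ∧ e ≤ u 0 := by
    have := hbounds 0 (by omega) e (le_refl e) hef
    simpa using this
  have hf0 : l 0 ≤ f ∧ f ≤ u 0 := by
    have := hbounds 0 (by omega) f hef (le_refl f)
    simpa using this
  have hcont : ContinuousOn (fun z => F^[m] z - z) (Set.Icc e f) :=
    ((hF.iterate m).sub continuous_id).continuousOn
  have hy : ∃ y ∈ Set.Icc e f, F^[m] y - y = 0 := by
    rcases hend with ⟨h1, h2⟩ | ⟨h1, h2⟩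
    · have hL : F^[m] e - e ≤ 0 := by rw [h1, hcyc_l]; linarith [he0.1]
      have hR : 0 ≤ F^[m] f - f := by rw [h2, hcyc_u]; linarith [hf0.2]
      have : (0:ℝ) ∈ Set.Icc (F^[m] e - e) (F^[m] f - f) := ⟨hL, hR⟩
      obtain ⟨y, hy, hval⟩ := intermediate_value_Icc hef hcont this
      exact ⟨y, hy, hval⟩
    · have hL : 0 ≤ F^[m] e - e := by rw [h1, hcyc_u]; linarith [he0.2]
      have hR : F^[m] f - f ≤ 0 := by rw [h2, hcyc_l]; linarith [hf0.1]
      have : (0:ℝ) ∈ Set.Icc (F^[m] f - f) (F^[m] e - e) := ⟨hR, hL⟩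
      obtain ⟨y, hy, hval⟩ := intermediate_value_Icc' hef hcont this
      exact ⟨y, hy, hval⟩
  obtain ⟨y, hy, hval⟩ := hy
  refine ⟨y, by linarith [hval], ?_⟩
  intro i hi
  exact hbounds i hi y hy.1 hy.2



theorem exists_sup_preimage {F : ℝ → ℝ} (hF : Continuous F) {p q v : ℝ} (hpq : p ≤ q)
    (hv : v ∈ Set.Icc (F p) (F q) ∪ Set.Icc (F q) (F p)) :
    ∃ b1, p ≤ b1 ∧ b1 ≤ q ∧ F b1 = v ∧ ∀ z, p ≤ z → z ≤ q → F z = v → z ≤ b1 := by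
  have hne : ∃ z ∈ Set.Icc p q, F z = v := by
    rcases hv with h | h
    · obtain ⟨z, hz, hval⟩ := intermediate_value_Icc hpq hF.continuousOn h
      exact ⟨z, hz, hval⟩
    · obtain ⟨z, hz, hval⟩ := intermediate_value_Icc' hpq hF.continuousOn h
      exact ⟨z, hz, hval⟩
  set S : Set ℝ := {z | z ∈ Set.Icc p q ∧ F z = v} with hS
  have hclosed : IsClosed S := by
    have : S = Set.Icc p q ∩ F ⁻¹' {v} := by ext z; simp [hS]
    rw [this]; exact isClosed_Icc.inter (isClosed_singleton.preimage hF)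
  have hne' : S.Nonempty := by obtain ⟨z, h1, h2⟩ := hne; exact ⟨z, h1, h2⟩
  have hbdd : BddAbove S := ⟨q, fun z hz => hz.1.2⟩
  have hmem : sSup S ∈ S := hclosed.csSup_mem hne' hbdd
  exact ⟨sSup S, hmem.1.1, hmem.1.2, hmem.2, fun z h1 h2 h3 => le_csSup hbdd ⟨⟨h1, h2⟩, h3⟩⟩

theorem exists_inf_preimage {F : ℝ → ℝ} (hF : Continuous F) {p q v : ℝ} (hpq : p ≤ q)
    (hv : v ∈ Set.Icc (F p) (F q) ∪ Set.Icc (F q) (F p)) :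
    ∃ b2, p ≤ b2 ∧ b2 ≤ q ∧ F b2 = v ∧ ∀ z, p ≤ z → z ≤ q → F z = v → b2 ≤ z := by
  have hne : ∃ z ∈ Set.Icc p q, F z = v := by
    rcases hv with h | h
    · obtain ⟨z, hz, hval⟩ := intermediate_value_Icc hpq hF.continuousOn h
      exact ⟨z, hz, hval⟩
    · obtain ⟨z, hz, hval⟩ := intermediate_value_Icc' hpq hF.continuousOn h
      exact ⟨z, hz, hval⟩
  set S : Set ℝ := {z | z ∈ Set.Icc p q ∧ F z = v} with hS
  have hclosed : IsClosed S := by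
    have : S = Set.Icc p q ∩ F ⁻¹' {v} := by ext z; simp [hS]
    rw [this]; exact isClosed_Icc.inter (isClosed_singleton.preimage hF)
  have hne' : S.Nonempty := by obtain ⟨z, h1, h2⟩ := hne; exact ⟨z, h1, h2⟩
  have hbdd : BddBelow S := ⟨p, fun z hz => hz.1.1⟩
  have hmem : sInf S ∈ S := hclosed.csInf_mem hne' hbdd
  exact ⟨sInf S, hmem.1.1, hmem.1.2, hmem.2, fun z h1 h2 h3 => csInf_le hbdd ⟨⟨h1, h2⟩, h3⟩⟩

theorem pattern_down_gives_periods {F : ℝ → ℝ} (hF : Continuous F) {a b c : ℝ}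
    (hab : a < b) (hbc : b < c) (ha : c ≤ F a) (hb : F b ≤ a) (hc : c ≤ F c) :
    ∀ m : ℕ, 1 ≤ m → ∃ y : ℝ, HasExactPeriod F m y := by
  intro m hm
  -- b1 : largest point of [a,b] with F = a
  obtain ⟨b1, hb1a, hb1b, hb1val, _⟩ :=
    exists_sup_preimage hF (le_of_lt hab) (v := a)
      (Or.inr ⟨hb, le_trans (le_trans (le_of_lt hab) (le_of_lt hbc)) ha⟩)
  obtain ⟨b2, hb2b, hb2c, hb2val, _⟩ :=
    exists_inf_preimage hF (le_of_lt hbc) (v := a)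
      (Or.inl ⟨hb, le_trans (le_trans (le_of_lt hab) (le_of_lt hbc)) hc⟩)
  have hab1 : a < b1 := by
    rcases lt_or_eq_of_le hb1a with h | h
    · exact h
    · exfalso; rw [← h] at hb1val; rw [hb1val] at ha; linarith
  have hb2c' : b2 < c := by
    rcases lt_or_eq_of_le hb2c with h | h
    · exact h
    · exfalso; rw [h] at hb2val; rw [hb2val] at hc; linarith
  set l : ℕ → ℝ := fun i => if i = 0 ∨ i = m then a else b2 with hl_def
  set u : ℕ → ℝ := fun i => if i = 0 ∨ i = m then b1 else c with hu_def
  have hac : a ≤ c := by linarith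
  obtain ⟨y, hym, hybounds⟩ := loop_theorem hF hac m hm l u
    (by intro i hi; simp only [hl_def]; split
        · exact le_refl a
        · linarith)
    (by intro i hi; simp only [hl_def, hu_def]; split
        · exact le_of_lt hab1
        · exact le_of_lt hb2c')
    (by intro i hi; simp only [hu_def]; split
        · linarith
        · exact le_refl c)
    (by simp [hl_def]) (by simp [hu_def])
    (by intro i hi
        simp only [hl_def, hu_def]
        by_cases h0 : i = 0 ∨ i = m
        · simp only [h0, if_pos]
          right
          exact ⟨ha, by rw [hb1val]⟩
        · simp only [h0, if_neg, if_false]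
          left
          exact ⟨by rw [hb2val], hc⟩)
  refine ⟨y, hym, ?_⟩
  intro i hi1 him hcontra
  -- y ∈ [a, b1], F^[i] y ∈ [b2, c]
  have hy0 : a ≤ y ∧ y ≤ b1 := by
    have := hybounds 0 (by omega)
    simpa [hl_def, hu_def] using this
  have hyi : b2 ≤ F^[i] y ∧ F^[i] y ≤ c := by
    have := hybounds i (by omega)
    have hne : ¬(i = 0 ∨ i = m) := by omega
    simpa [hl_def, hu_def, hne] using this
  rw [hcontra] at hyi
  -- so b2 ≤ y ≤ b1 ≤ b ≤ b2, hence y = b1 = b2 = b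
  have h1 : y = b1 := le_antisymm hy0.2 (by linarith [hyi.1])
  have hFy : F y = a := by rw [h1]; exact hb1val
  -- since m ≥ 2, F^[1] y ∈ [b2, c]
  have hm2 : 2 ≤ m := by omega
  have hy1 : b2 ≤ F^[1] y ∧ F^[1] y ≤ c := by
    have := hybounds 1 (by omega)
    have hne : (1:ℕ) ≠ m := by omega
    simpa [hl_def, hu_def, hne] using this
  simp only [Function.iterate_one] at hy1
  rw [hFy] at hy1
  linarith [hy1.1, hyi.1, hy0.2]

theorem pattern_up_gives_periods {F : ℝ → ℝ} (hF : Continuous F) {a b c : ℝ}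
    (hab : a < b) (hbc : b < c) (ha : F a ≤ a) (hb : c ≤ F b) (hc : F c ≤ a) :
    ∀ m : ℕ, 1 ≤ m → ∃ y : ℝ, HasExactPeriod F m y := by
  intro m hm
  obtain ⟨b1, hb1a, hb1b, hb1val, _⟩ :=
    exists_sup_preimage hF (le_of_lt hab) (v := c)
      (Or.inl ⟨le_trans ha (le_trans (le_of_lt hab) (le_of_lt hbc)), hb⟩)
  obtain ⟨b2, hb2b, hb2c, hb2val, _⟩ :=
    exists_inf_preimage hF (le_of_lt hbc) (v := c)
      (Or.inr ⟨le_trans hc (le_trans (le_of_lt hab) (le_of_lt hbc)), hb⟩)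
  have hab1 : a < b1 := by
    rcases lt_or_eq_of_le hb1a with h | h
    · exact h
    · exfalso; rw [← h] at hb1val; rw [hb1val] at ha; linarith
  have hb2c' : b2 < c := by
    rcases lt_or_eq_of_le hb2c with h | h
    · exact h
    · exfalso; rw [h] at hb2val; rw [hb2val] at hc; linarith
  set l : ℕ → ℝ := fun i => if i = 0 ∨ i = m then b2 else a with hl_def
  set u : ℕ → ℝ := fun i => if i = 0 ∨ i = m then c else b1 with hu_def
  have hac : a ≤ c := by linarith
  obtain ⟨y, hym, hybounds⟩ := loop_theorem hF hac m hm l u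
    (by intro i hi; simp only [hl_def]; split
        · linarith
        · exact le_refl a)
    (by intro i hi; simp only [hl_def, hu_def]; split
        · exact le_of_lt hb2c'
        · exact le_of_lt hab1)
    (by intro i hi; simp only [hu_def]; split
        · exact le_refl c
        · linarith)
    (by simp [hl_def]) (by simp [hu_def])
    (by intro i hi
        simp only [hl_def, hu_def]
        by_cases h0 : i = 0 ∨ i = m
        · simp only [h0, if_pos]
          right
          exact ⟨by rw [hb2val], hc⟩
        · simp only [h0, if_neg, if_false]
          left
          exact ⟨ha, by rw [hb1val]⟩)
  refine ⟨y, hym, ?_⟩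
  intro i hi1 him hcontra
  have hy0 : b2 ≤ y ∧ y ≤ c := by
    have := hybounds 0 (by omega)
    simpa [hl_def, hu_def] using this
  have hyi : a ≤ F^[i] y ∧ F^[i] y ≤ b1 := by
    have := hybounds i (by omega)
    have hne : ¬(i = 0 ∨ i = m) := by omega
    simpa [hl_def, hu_def, hne] using this
  rw [hcontra] at hyi
  have h1 : y = b2 := le_antisymm (by linarith [hyi.2]) hy0.1
  have hFy : F y = c := by rw [h1]; exact hb2val
  have hm2 : 2 ≤ m := by omega
  have hy1 : a ≤ F^[1] y ∧ F^[1] y ≤ b1 := by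
    have := hybounds 1 (by omega)
    have hne : (1:ℕ) ≠ m := by omega
    simpa [hl_def, hu_def, hne] using this
  simp only [Function.iterate_one] at hy1
  rw [hFy] at hy1
  linarith [hy1.2, hyi.2, hy0.1]


theorem crossings {F : ℝ → ℝ} (hF : Continuous F) (hlift : ∀ x, F (x + 1) = F x + 1)
    (x : ℝ) (n : ℕ) (hn : 1 ≤ n) (hper : F^[n] x = x)
    (hbig : sSup (Set.range fun i : ℕ => F^[i] x) -
            sInf (Set.range fun i : ℕ => F^[i] x) > 1) :
    (∀ t : ℝ, ∃ y, y ≤ t ∧ t < F y) ∧ (∀ t : ℝ, ∃ w, t ≤ w ∧ F w < t) := by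
  classical
  set S := Finset.image (fun i => F^[i] x) (Finset.range n) with hS
  have hSne : S.Nonempty := ⟨x, by
    simp only [hS, Finset.mem_image]
    exact ⟨0, Finset.mem_range.mpr (by omega), rfl⟩⟩
  have hmul : ∀ k i : ℕ, F^[i + k * n] x = F^[i] x := by
    intro k
    induction k with
    | zero => simp
    | succ k ih =>
        intro i
        have : i + (k+1) * n = (i + k * n) + n := by ring
        rw [this, Function.iterate_add_apply, hper]
        exact ih i
  have hmem : ∀ i : ℕ, F^[i] x ∈ S := by
    intro i
    have h1 : F^[i] x = F^[i % n] x := by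
      conv_lhs => rw [show i = i % n + (i / n) * n by
        rw [Nat.mod_add_div' i n]]
      exact hmul (i/n) (i % n)
    rw [h1]
    simp only [hS, Finset.mem_image]
    exact ⟨i % n, Finset.mem_range.mpr (Nat.mod_lt i (by omega)), rfl⟩
  have hrange : (Set.range fun i : ℕ => F^[i] x) = ↑S := by
    ext y
    constructor
    · rintro ⟨i, rfl⟩; exact hmem i
    · intro hy
      simp only [hS, Finset.coe_image, Set.mem_image, Finset.coe_range, Set.mem_Iio] at hy
      obtain ⟨i, _, rfl⟩ := hy
      exact ⟨i, rfl⟩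
  set M := S.max' hSne with hM
  set μ := S.min' hSne with hμ
  have hsup : sSup (Set.range fun i : ℕ => F^[i] x) = M := by
    rw [hrange]
    exact IsGreatest.csSup_eq ⟨S.max'_mem hSne, fun y hy => S.le_max' y hy⟩
  have hinf : sInf (Set.range fun i : ℕ => F^[i] x) = μ := by
    rw [hrange]
    exact IsLeast.csInf_eq ⟨S.min'_mem hSne, fun y hy => S.min'_le y hy⟩
  rw [hsup, hinf] at hbig
  obtain ⟨iM, hiMr, hiM⟩ := Finset.mem_image.mp (S.max'_mem hSne)
  obtain ⟨iμ, hiμr, hiμ⟩ := Finset.mem_image.mp (S.min'_mem hSne)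
  have hiMn : iM < n := Finset.mem_range.mp hiMr
  have hiμn : iμ < n := Finset.mem_range.mp hiμr
  constructor
  · intro t
    set k : ℤ := ⌈t - μ⌉ - 1 with hk
    have hk1 : μ + (k:ℝ) < t := by
      have := Int.ceil_lt_add_one (t - μ)
      push_cast [hk]
      linarith
    have hk2 : t < M + (k:ℝ) := by
      have := Int.le_ceil (t - μ)
      push_cast [hk]
      linarith
    set c : ℕ → ℝ := fun s => F^[iμ + s] x + k with hc
    have hc0 : c 0 ≤ t := by
      simp only [hc, Nat.add_zero, hiμ]
      linarith
    have hEx : ∃ s, t < c s := by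
      refine ⟨iM + n - iμ, ?_⟩
      have h1 : iμ + (iM + n - iμ) = iM + 1 * n := by omega
      simp only [hc, h1, hmul, hiM]
      linarith
    set s₀ := Nat.find hEx with hs₀
    have hfind : t < c s₀ := Nat.find_spec hEx
    have hs₀pos : s₀ ≠ 0 := by
      intro h
      rw [h] at hfind
      linarith
    have hprev : ¬ t < c (s₀ - 1) := Nat.find_min hEx (by omega)
    push_neg at hprev
    refine ⟨F^[iμ + (s₀ - 1)] x + k, hprev, ?_⟩
    have hstep : F (F^[iμ + (s₀ - 1)] x + k) = F^[iμ + s₀] x + k := by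
      rw [lift_int hlift k]
      have : iμ + s₀ = (iμ + (s₀ - 1)) + 1 := by omega
      rw [this, Function.iterate_succ_apply' F]
    rw [hstep]
    exact hfind
  · intro t
    set k : ℤ := ⌈t - μ⌉ - 1 with hk
    have hk1 : μ + (k:ℝ) < t := by
      have := Int.ceil_lt_add_one (t - μ)
      push_cast [hk]
      linarith
    have hk2 : t < M + (k:ℝ) := by
      have := Int.le_ceil (t - μ)
      push_cast [hk]
      linarith
    set c : ℕ → ℝ := fun s => F^[iM + s] x + k with hc
    have hc0 : t ≤ c 0 := by
      simp only [hc, Nat.add_zero, hiM]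
      linarith
    have hEx : ∃ s, c s < t := by
      refine ⟨iμ + n - iM, ?_⟩
      have h1 : iM + (iμ + n - iM) = iμ + 1 * n := by omega
      simp only [hc, h1, hmul, hiμ]
      linarith
    set s₀ := Nat.find hEx with hs₀
    have hfind : c s₀ < t := Nat.find_spec hEx
    have hs₀pos : s₀ ≠ 0 := by
      intro h
      rw [h] at hfind
      linarith
    have hprev : ¬ c (s₀ - 1) < t := Nat.find_min hEx (by omega)
    push_neg at hprev
    refine ⟨F^[iM + (s₀ - 1)] x + k, hprev, ?_⟩
    have hstep : F (F^[iM + (s₀ - 1)] x + k) = F^[iM + s₀] x + k := by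
      rw [lift_int hlift k]
      have : iM + s₀ = (iM + (s₀ - 1)) + 1 := by omega
      rw [this, Function.iterate_succ_apply' F]
    rw [hstep]
    exact hfind



section LemA

variable {F : ℝ → ℝ}

theorem fixed_exists (hF : Continuous F)
    (H1 : ∀ t : ℝ, ∃ y, y ≤ t ∧ t < F y) (H2 : ∀ t : ℝ, ∃ w, t ≤ w ∧ F w < t) :
    ∃ z, F z = z := by
  obtain ⟨y, hy1, hy2⟩ := H1 0
  obtain ⟨w, hw1, hw2⟩ := H2 y
  have hyw : y ≤ w := hw1
  have hcont : ContinuousOn (fun z => F z - z) (Set.Icc y w) :=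
    (hF.sub continuous_id).continuousOn
  have h0 : (0:ℝ) ∈ Set.Icc (F w - w) (F y - y) := by
    simp only [Set.mem_Icc]; constructor <;> linarith
  obtain ⟨z, _, hz⟩ := intermediate_value_Icc' hyw hcont h0
  have hz' : F z - z = 0 := by simpa using hz
  exact ⟨z, by linarith⟩

theorem gap_neg (hF : Continuous F) (hlift : ∀ x, F (x + 1) = F x + 1)
    {x₀ : ℝ} (hx : F x₀ < x₀) (z : ℝ) (hz : F z = z) :
    ∃ α β, F α = α ∧ F β = β ∧ α < x₀ ∧ x₀ < β ∧ ∀ y, α < y → y < β → F y < y := by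
  have hZclosed : IsClosed {z : ℝ | F z = z} := isClosed_eq hF continuous_id
  have hfix_int : ∀ k : ℤ, F (z + k) = z + k := by
    intro k; rw [lift_int hlift, hz]
  -- α
  set A : Set ℝ := {w | F w = w ∧ w ≤ x₀} with hA
  have hAclosed : IsClosed A := by
    have : A = {z : ℝ | F z = z} ∩ Set.Iic x₀ := by ext w; simp [hA, Set.mem_inter_iff]
    rw [this]; exact hZclosed.inter isClosed_Iic
  have hAne : A.Nonempty := by
    refine ⟨z + ⌊x₀ - z⌋, hfix_int _, ?_⟩
    linarith [Int.floor_le (x₀ - z)]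
  have hAbdd : BddAbove A := ⟨x₀, fun w hw => hw.2⟩
  set α := sSup A with hα
  have hαA : α ∈ A := hAclosed.csSup_mem hAne hAbdd
  have hαlt : α < x₀ := by
    rcases lt_or_eq_of_le hαA.2 with h | h
    · exact h
    · exfalso; have := hαA.1; rw [h] at this; linarith
  -- β
  set B : Set ℝ := {w | F w = w ∧ x₀ ≤ w} with hB
  have hBclosed : IsClosed B := by
    have : B = {z : ℝ | F z = z} ∩ Set.Ici x₀ := by ext w; simp [hB, Set.mem_inter_iff]
    rw [this]; exact hZclosed.inter isClosed_Ici
  have hBne : B.Nonempty := by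
    refine ⟨z + ⌈x₀ - z⌉, hfix_int _, ?_⟩
    linarith [Int.le_ceil (x₀ - z)]
  have hBbdd : BddBelow B := ⟨x₀, fun w hw => hw.2⟩
  set β := sInf B with hβ
  have hβB : β ∈ B := hBclosed.csInf_mem hBne hBbdd
  have hβgt : x₀ < β := by
    rcases lt_or_eq_of_le hβB.2 with h | h
    · exact h
    · exfalso; have := hβB.1; rw [← h] at this; linarith
  refine ⟨α, β, hαA.1, hβB.1, hαlt, hβgt, ?_⟩
  intro y hy1 hy2
  by_contra hcon
  push_neg at hcon
  rcases lt_or_eq_of_le hcon with hgt | heq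
  · -- F y > y : IVT between y and x₀ gives interior fixed point
    rcases le_total y x₀ with hyx | hyx
    · have hcont : ContinuousOn (fun w => F w - w) (Set.Icc y x₀) :=
        (hF.sub continuous_id).continuousOn
      have h0 : (0:ℝ) ∈ Set.Icc (F x₀ - x₀) (F y - y) := by
        simp only [Set.mem_Icc]; constructor <;> linarith
      obtain ⟨w, hw, hweq⟩ := intermediate_value_Icc' hyx hcont h0
      have hwfix : F w = w := by
        have hweq' : F w - w = 0 := by simpa using hweq
        linarith
      have : w ≤ α := le_csSup hAbdd ⟨hwfix, hw.2⟩
      linarith [hw.1]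
    · have hcont : ContinuousOn (fun w => F w - w) (Set.Icc x₀ y) :=
        (hF.sub continuous_id).continuousOn
      have h0 : (0:ℝ) ∈ Set.Icc (F x₀ - x₀) (F y - y) := by
        simp only [Set.mem_Icc]; constructor <;> linarith
      obtain ⟨w, hw, hweq⟩ := intermediate_value_Icc hyx hcont h0
      have hwfix : F w = w := by
        have hweq' : F w - w = 0 := by simpa using hweq
        linarith
      have : β ≤ w := csInf_le hBbdd ⟨hwfix, hw.1⟩
      linarith [hw.2]
  · -- F y = y : y fixed, contradiction with gap
    rcases le_total y x₀ with hyx | hyx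
    · have : y ≤ α := le_csSup hAbdd ⟨heq.symm, hyx⟩
      linarith
    · have : β ≤ y := csInf_le hBbdd ⟨heq.symm, hyx⟩
      linarith

theorem gap_pos (hF : Continuous F) (hlift : ∀ x, F (x + 1) = F x + 1)
    {x₀ : ℝ} (hx : x₀ < F x₀) (z : ℝ) (hz : F z = z) :
    ∃ α β, F α = α ∧ F β = β ∧ α < x₀ ∧ x₀ < β ∧ ∀ y, α < y → y < β → y < F y := by
  have hZclosed : IsClosed {z : ℝ | F z = z} := isClosed_eq hF continuous_id
  have hfix_int : ∀ k : ℤ, F (z + k) = z + k := by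
    intro k; rw [lift_int hlift, hz]
  set A : Set ℝ := {w | F w = w ∧ w ≤ x₀} with hA
  have hAclosed : IsClosed A := by
    have : A = {z : ℝ | F z = z} ∩ Set.Iic x₀ := by ext w; simp [hA, Set.mem_inter_iff]
    rw [this]; exact hZclosed.inter isClosed_Iic
  have hAne : A.Nonempty := by
    refine ⟨z + ⌊x₀ - z⌋, hfix_int _, ?_⟩
    linarith [Int.floor_le (x₀ - z)]
  have hAbdd : BddAbove A := ⟨x₀, fun w hw => hw.2⟩
  set α := sSup A with hα
  have hαA : α ∈ A := hAclosed.csSup_mem hAne hAbdd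
  have hαlt : α < x₀ := by
    rcases lt_or_eq_of_le hαA.2 with h | h
    · exact h
    · exfalso; have := hαA.1; rw [h] at this; linarith
  set B : Set ℝ := {w | F w = w ∧ x₀ ≤ w} with hB
  have hBclosed : IsClosed B := by
    have : B = {z : ℝ | F z = z} ∩ Set.Ici x₀ := by ext w; simp [hB, Set.mem_inter_iff]
    rw [this]; exact hZclosed.inter isClosed_Ici
  have hBne : B.Nonempty := by
    refine ⟨z + ⌈x₀ - z⌉, hfix_int _, ?_⟩
    linarith [Int.le_ceil (x₀ - z)]
  have hBbdd : BddBelow B := ⟨x₀, fun w hw => hw.2⟩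
  set β := sInf B with hβ
  have hβB : β ∈ B := hBclosed.csInf_mem hBne hBbdd
  have hβgt : x₀ < β := by
    rcases lt_or_eq_of_le hβB.2 with h | h
    · exact h
    · exfalso; have := hβB.1; rw [← h] at this; linarith
  refine ⟨α, β, hαA.1, hβB.1, hαlt, hβgt, ?_⟩
  intro y hy1 hy2
  by_contra hcon
  push_neg at hcon
  rcases lt_or_eq_of_le hcon with hgt | heq
  · rcases le_total y x₀ with hyx | hyx
    · have hcont : ContinuousOn (fun w => F w - w) (Set.Icc y x₀) :=
        (hF.sub continuous_id).continuousOn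
      have h0 : (0:ℝ) ∈ Set.Icc (F y - y) (F x₀ - x₀) := by
        simp only [Set.mem_Icc]; constructor <;> linarith
      obtain ⟨w, hw, hweq⟩ := intermediate_value_Icc hyx hcont h0
      have hwfix : F w = w := by
        have hweq' : F w - w = 0 := by simpa using hweq
        linarith
      have : w ≤ α := le_csSup hAbdd ⟨hwfix, hw.2⟩
      linarith [hw.1]
    · have hcont : ContinuousOn (fun w => F w - w) (Set.Icc x₀ y) :=
        (hF.sub continuous_id).continuousOn
      have h0 : (0:ℝ) ∈ Set.Icc (F y - y) (F x₀ - x₀) := by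
        simp only [Set.mem_Icc]; constructor <;> linarith
      obtain ⟨w, hw, hweq⟩ := intermediate_value_Icc' hyx hcont h0
      have hwfix : F w = w := by
        have hweq' : F w - w = 0 := by simpa using hweq
        linarith
      have : β ≤ w := csInf_le hBbdd ⟨hwfix, hw.1⟩
      linarith [hw.2]
  · rcases le_total y x₀ with hyx | hyx
    · have : y ≤ α := le_csSup hAbdd ⟨heq, hyx⟩
      linarith
    · have : β ≤ y := csInf_le hBbdd ⟨heq, hyx⟩
      linarith

theorem up_jumper (hF : Continuous F) {C : ℝ} (hC0 : 0 ≤ C) (hCb : ∀ x, F x - x ≤ C)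
    (H1 : ∀ t : ℝ, ∃ y, y ≤ t ∧ t < F y)
    {α β : ℝ} (hα : F α = α) (hβ : F β = β) (hαβ : α < β)
    (hneg : ∀ y, α < y → y < β → F y < y) :
    ∃ y, y < α ∧ β ≤ F y := by
  have hcompact : IsCompact (Set.Icc (α - C - 1) α) := isCompact_Icc
  have hne : (Set.Icc (α - C - 1) α).Nonempty := ⟨α, by constructor <;> linarith⟩
  obtain ⟨y', hy'mem, hy'max⟩ := hcompact.exists_isMaxOn hne hF.continuousOn
  set M := F y' with hM
  have hkey : ∀ t, α < t → t < β → t < M := by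
    intro t ht1 ht2
    obtain ⟨y, hy1, hy2⟩ := H1 t
    have hyα : y ≤ α := by
      by_contra hcon
      push_neg at hcon
      have : F y < y := hneg y hcon (by linarith)
      linarith
    have hylo : α - C - 1 ≤ y := by
      have := hCb y
      linarith
    have : F y ≤ M := hy'max ⟨hylo, hyα⟩
    linarith
  have hMβ : β ≤ M := by
    by_contra hcon
    push_neg at hcon
    have h1 : max α M < β := max_lt hαβ hcon
    set t := (max α M + β) / 2 with ht
    have ht1 : α < t := by
      have : α ≤ max α M := le_max_left _ _
      have : max α M < t := by rw [ht]; linarith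
      linarith
    have ht2 : t < β := by rw [ht]; linarith
    have := hkey t ht1 ht2
    have : M ≤ max α M := le_max_right _ _
    have h2 : max α M < t := by rw [ht]; linarith [max_lt hαβ hcon]
    linarith
  have hy'α : y' < α := by
    rcases lt_or_eq_of_le hy'mem.2 with h | h
    · exact h
    · exfalso; rw [h] at hM; rw [hα] at hM; linarith
  exact ⟨y', hy'α, by rw [← hM]; exact hMβ⟩

theorem down_jumper (hF : Continuous F) {C : ℝ} (hC0 : 0 ≤ C) (hCb : ∀ x, -C ≤ F x - x)
    (H2 : ∀ t : ℝ, ∃ w, t ≤ w ∧ F w < t)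
    {γ δ : ℝ} (hγ : F γ = γ) (hδ : F δ = δ) (hγδ : γ < δ)
    (hpos : ∀ y, γ < y → y < δ → y < F y) :
    ∃ w, δ < w ∧ F w ≤ γ := by
  have hcompact : IsCompact (Set.Icc δ (δ + C + 1)) := isCompact_Icc
  have hne : (Set.Icc δ (δ + C + 1)).Nonempty := ⟨δ, by constructor <;> linarith⟩
  obtain ⟨w', hw'mem, hw'min⟩ := hcompact.exists_isMinOn hne hF.continuousOn
  set L := F w' with hL
  have hkey : ∀ t, γ < t → t < δ → L < t := by
    intro t ht1 ht2
    obtain ⟨w, hw1, hw2⟩ := H2 t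
    have hwδ : δ ≤ w := by
      by_contra hcon
      push_neg at hcon
      rcases lt_or_eq_of_le hw1 with h | h
      · have : w < F w := hpos w (by linarith) hcon
        linarith
      · have := hpos t ht1 ht2
        rw [← h] at hw2
        linarith
    have hwδ' : δ < w := by
      rcases lt_or_eq_of_le hwδ with h | h
      · exact h
      · exfalso; rw [← h] at hw2; rw [hδ] at hw2; linarith
    have hwhi : w ≤ δ + C + 1 := by
      have := hCb w
      linarith
    have : L ≤ F w := hw'min ⟨hwδ, hwhi⟩
    linarith
  have hLγ : L ≤ γ := by
    by_contra hcon
    push_neg at hcon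
    have h1 : γ < min δ L := lt_min hγδ hcon
    set t := (γ + min δ L) / 2 with ht
    have ht1 : γ < t := by rw [ht]; linarith
    have ht2 : t < δ := by
      have : min δ L ≤ δ := min_le_left _ _
      rw [ht]; linarith
    have h3 := hkey t ht1 ht2
    have : min δ L ≤ L := min_le_right _ _
    have h4 : t < min δ L := by rw [ht]; linarith
    linarith
  have hw'δ : δ < w' := by
    rcases lt_or_eq_of_le hw'mem.1 with h | h
    · exact h
    · exfalso; rw [← h] at hL; rw [hδ] at hL; linarith
  exact ⟨w', hw'δ, by rw [← hL]; exact hLγ⟩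

end LemA







/-- the invariant for the state (y, γ, δ, β) -/
structure PatInv (F : ℝ → ℝ) (y γ δ β : ℝ) : Prop where
  hγ : F γ = γ
  hδ : F δ = δ
  hβ : F β = β
  hγy : γ < y
  hyδ : y < δ
  hpos : ∀ t, γ < t → t < δ → t < F t
  hjump : β ≤ F y
  hyβ : y < β

theorem pattern_exists {F : ℝ → ℝ} (hF : Continuous F) (hlift : ∀ x, F (x + 1) = F x + 1)
    (H1 : ∀ t : ℝ, ∃ y, y ≤ t ∧ t < F y) (H2 : ∀ t : ℝ, ∃ w, t ≤ w ∧ F w < t) :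
    ∃ a b c : ℝ, a < b ∧ b < c ∧
      ((F a ≤ a ∧ c ≤ F b ∧ F c ≤ a) ∨ (c ≤ F a ∧ F b ≤ a ∧ c ≤ F c)) := by
  by_contra hcon
  push_neg at hcon
  -- extract the two pattern-failure statements
  have hUP : ∀ a b c : ℝ, a < b → b < c → F a ≤ a → c ≤ F b → ¬ F c ≤ a := by
    intro a b c h1 h2 h3 h4
    exact not_le.mpr ((hcon a b c h1 h2).1 h3 h4)
  have hDOWN : ∀ a b c : ℝ, a < b → b < c → c ≤ F a → F b ≤ a → ¬ c ≤ F c := by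
    intro a b c h1 h2 h3 h4
    exact not_le.mpr ((hcon a b c h1 h2).2 h3 h4)
  obtain ⟨C, hC0, hCup, hCdown⟩ := bound_above hF hlift
  obtain ⟨z, hz⟩ := fixed_exists hF H1 H2
  -- step function
  have step : ∀ y γ δ β, PatInv F y γ δ β →
      ∃ y' γ' δ' β', PatInv F y' γ' δ' β' ∧ y' < γ ∧ β < β' := by
    intro y γ δ β inv
    obtain ⟨w, hw1, hw2⟩ := down_jumper hF hC0 hCdown H2 inv.hγ inv.hδ
      (lt_trans inv.hγy inv.hyδ) inv.hpos
    have hyw : y < w := lt_trans inv.hyδ hw1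
    have hwβ : β < w := by
      rcases lt_trichotomy w β with h | h | h
      · exfalso
        exact hDOWN y w β hyw h inv.hjump (le_trans hw2 (le_of_lt inv.hγy)) (le_of_eq inv.hβ.symm)
      · exfalso
        rw [h] at hw2
        rw [inv.hβ] at hw2
        have : γ < β := lt_trans inv.hγy inv.hyβ
        linarith
      · exact h
    have hFww : F w < w := by
      have : γ < w := lt_trans inv.hγy hyw
      linarith [hw2]
    obtain ⟨α', β', hα', hβ', hα'w, hwβ', hneg'⟩ := gap_neg hF hlift hFww z hz
    obtain ⟨y', hy'1, hy'2⟩ := up_jumper hF hC0 hCup H1 hα' hβ' (lt_trans hα'w hwβ') hneg'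
    have hy'γ : y' < γ := by
      rcases lt_trichotomy y' γ with h | h | h
      · exact h
      · exfalso
        rw [h] at hy'2
        rw [inv.hγ] at hy'2
        have : γ < β' := lt_trans (lt_trans inv.hγy hyw) hwβ'
        linarith
      · exfalso
        have hy'w : y' < w := lt_trans hy'1 hα'w
        exact hUP γ y' w h hy'w (le_of_eq inv.hγ) (le_trans (le_of_lt hwβ') hy'2) hw2
    have hy'Fy' : y' < F y' := by
      have h1 : y' < β' := lt_trans (lt_trans hy'1 hα'w) hwβ'
      linarith [hy'2]
    obtain ⟨γ'', δ'', hγ'', hδ'', hγ''y', hy'δ'', hpos''⟩ := gap_pos hF hlift hy'Fy' z hz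
    refine ⟨y', γ'', δ'', β', ⟨hγ'', hδ'', hβ', hγ''y', hy'δ'', hpos'', hy'2,
      lt_trans (lt_trans hy'1 hα'w) hwβ'⟩, hy'γ, lt_trans hwβ hwβ'⟩
  -- initial state
  obtain ⟨w₀, hw₀1, hw₀2⟩ := H2 0
  have hFw₀ : F w₀ < w₀ := lt_of_lt_of_le hw₀2 hw₀1
  obtain ⟨α₀, β₀, hα₀, hβ₀, hα₀w, hwβ₀, hneg₀⟩ := gap_neg hF hlift hFw₀ z hz
  obtain ⟨y₀, hy₀1, hy₀2⟩ := up_jumper hF hC0 hCup H1 hα₀ hβ₀ (lt_trans hα₀w hwβ₀) hneg₀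
  have hy₀F : y₀ < F y₀ := by
    have : y₀ < β₀ := lt_trans (lt_trans hy₀1 hα₀w) hwβ₀
    linarith
  obtain ⟨γ₀, δ₀, hγ₀, hδ₀, hγ₀y, hyδ₀, hpos₀⟩ := gap_pos hF hlift hy₀F z hz
  have inv₀ : PatInv F y₀ γ₀ δ₀ β₀ :=
    ⟨hγ₀, hδ₀, hβ₀, hγ₀y, hyδ₀, hpos₀, hy₀2, lt_trans (lt_trans hy₀1 hα₀w) hwβ₀⟩
  -- build the sequence
  let T := {s : ℝ × ℝ × ℝ × ℝ // PatInv F s.1 s.2.1 s.2.2.1 s.2.2.2}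
  have stepT : ∀ s : T, ∃ s' : T, s'.1.1 < s.1.2.1 ∧ s.1.2.2.2 < s'.1.2.2.2 := by
    rintro ⟨⟨y, γ, δ, β⟩, inv⟩
    obtain ⟨y', γ', δ', β', inv', h1, h2⟩ := step y γ δ β inv
    exact ⟨⟨⟨y', γ', δ', β'⟩, inv'⟩, h1, h2⟩
  let t₀ : T := ⟨⟨y₀, γ₀, δ₀, β₀⟩, inv₀⟩
  let seq : ℕ → T := fun n => Nat.rec t₀ (fun _ t => Classical.choose (stepT t)) n
  have hseq : ∀ n, seq (n+1) = Classical.choose (stepT (seq n)) := fun n => rfl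
  set Y : ℕ → ℝ := fun n => (seq n).1.1 with hY
  set G : ℕ → ℝ := fun n => (seq n).1.2.1 with hG
  set B : ℕ → ℝ := fun n => (seq n).1.2.2.2 with hB
  have hrel : ∀ n, Y (n+1) < G n ∧ B n < B (n+1) := by
    intro n
    have := Classical.choose_spec (stepT (seq n))
    rw [← hseq n] at this
    exact this
  have hinv : ∀ n, PatInv F (Y n) (G n) ((seq n).1.2.2.1) (B n) := fun n => (seq n).2
  -- monotonicity
  have hYdec : ∀ n, Y (n+1) < Y n := by
    intro n
    exact lt_trans (hrel n).1 (hinv n).hγy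
  have hBinc : ∀ n, B n < B (n+1) := fun n => (hrel n).2
  have hYanti : StrictAnti Y := strictAnti_nat_of_succ_lt hYdec
  have hBmono : StrictMono B := strictMono_nat_of_lt_succ hBinc
  -- bounds
  have hjump : ∀ n, B n ≤ F (Y n) := fun n => (hinv n).hjump
  have hB0 : ∀ n, B 0 ≤ B n := fun n => hBmono.monotone (Nat.zero_le n)
  have hYlow : ∀ n, B 0 - C ≤ Y n := by
    intro n
    have h1 : B 0 ≤ F (Y n) := le_trans (hB0 n) (hjump n)
    have h2 : F (Y n) - Y n ≤ C := hCup (Y n)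
    linarith
  have hYhigh : ∀ n, Y n ≤ Y 0 := fun n => hYanti.antitone (Nat.zero_le n)
  have hBhigh : ∀ n, B n ≤ Y 0 + C := by
    intro n
    have h1 := hjump n
    have h2 := hCup (Y n)
    have := hYhigh n
    linarith
  -- limits
  have hYbdd : BddBelow (Set.range Y) := ⟨B 0 - C, by rintro _ ⟨n, rfl⟩; exact hYlow n⟩
  have hBbdd : BddAbove (Set.range B) := ⟨Y 0 + C, by rintro _ ⟨n, rfl⟩; exact hBhigh n⟩
  set L := ⨅ n, Y n with hL
  set Bs := ⨆ n, B n with hBs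
  have hYtend : Filter.Tendsto Y Filter.atTop (nhds L) :=
    tendsto_atTop_ciInf hYanti.antitone hYbdd
  have hBtend : Filter.Tendsto B Filter.atTop (nhds Bs) :=
    tendsto_atTop_ciSup hBmono.monotone hBbdd
  -- G squeezed between Y (n+1) and Y n
  have hGsq : ∀ n, Y (n+1) ≤ G n ∧ G n ≤ Y n := by
    intro n
    exact ⟨le_of_lt (hrel n).1, le_of_lt (hinv n).hγy⟩
  have hYshift : Filter.Tendsto (fun n => Y (n+1)) Filter.atTop (nhds L) :=
    hYtend.comp (Filter.tendsto_add_atTop_nat 1)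
  have hGtend : Filter.Tendsto G Filter.atTop (nhds L) :=
    tendsto_of_tendsto_of_tendsto_of_le_of_le hYshift hYtend
      (fun n => (hGsq n).1) (fun n => (hGsq n).2)
  -- L is a fixed point
  have hGfix : ∀ n, F (G n) = G n := fun n => (hinv n).hγ
  have hFL : F L = L := by
    have h1 : Filter.Tendsto (fun n => F (G n)) Filter.atTop (nhds (F L)) :=
      (hF.tendsto L).comp hGtend
    have h2 : Filter.Tendsto (fun n => F (G n)) Filter.atTop (nhds L) := by
      simp only [hGfix]
      exact hGtend
    exact tendsto_nhds_unique h1 h2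
  -- pass jump inequality to the limit
  have hlim : Bs ≤ F L := by
    have h1 : Filter.Tendsto (fun n => F (Y n)) Filter.atTop (nhds (F L)) :=
      (hF.tendsto L).comp hYtend
    exact le_of_tendsto_of_tendsto hBtend h1 (Filter.Eventually.of_forall hjump)
  -- contradiction
  have h1 : L ≤ Y 1 := ciInf_le hYbdd 1
  have h2 : B 1 ≤ Bs := le_ciSup hBbdd 1
  have h3 : Y 1 < B 1 := (hinv 1).hyβ
  rw [hFL] at hlim
  linarith

end CircleLift


/-- If `F` is a lifting of a circle map of degree `1` and `F` has a periodic orbit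
`P` with `max P - min P > 1`, then `F` has periodic points of all exact periods. -/
theorem periods_of_degree_one_lifting_with_large_orbit
    (F : ℝ → ℝ) (hF : Continuous F)
    (hlift : ∀ x, F (x + 1) = F x + 1)
    (x : ℝ) (n : ℕ) (hn : 1 ≤ n) (hper : F^[n] x = x)
    (hbig : sSup (Set.range fun i : ℕ => F^[i] x) -
            sInf (Set.range fun i : ℕ => F^[i] x) > 1) :
    ∀ m : ℕ, 1 ≤ m → ∃ y : ℝ, HasExactPeriod F m y := by
  intro m hm
  obtain ⟨H1, H2⟩ := crossings hF hlift x n hn hper hbig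
  obtain ⟨a, b, c, hab, hbc, hpat⟩ := pattern_exists hF hlift H1 H2
  rcases hpat with ⟨h1, h2, h3⟩ | ⟨h1, h2, h3⟩
  · exact pattern_up_gives_periods hF hab hbc h1 h2 h3 m hm
  · exact pattern_down_gives_periods hF hab hbc h1 h2 h3 m hm
end

section
/- Let F : ℝ → ℝ be a continuous map such that F(x+1) = F(x) + 1 for all x ∈ ℝ, and assume F has a periodic orbit P of period n with max P − min P > 1. Define F_u(x) = sup{F(y) : y ≤ x} and F_l(x) = inf{F(y) : y ≥ x}. Then F_u and F_l are continuous non-decreasing maps satisfying F_u(x+1) = F_u(x)+1 and F_l(x+1) = F_l(x)+1, their translation (rotation) numbers τ(F_u) and τ(F_l) exist, and τ(F_u) > 1/n while τ(F_l) < −1/n. -/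
open Filter Topology

/-- The upper map `F_u(x) = sup {F(y) : y ≤ x}`. -/
noncomputable def upperMap (F : ℝ → ℝ) (x : ℝ) : ℝ := sSup (F '' Set.Iic x)

/-- The lower map `F_l(x) = inf {F(y) : y ≥ x}`. -/
noncomputable def lowerMap (F : ℝ → ℝ) (x : ℝ) : ℝ := sInf (F '' Set.Ici x)

section AuxULTN

variable {F : ℝ → ℝ} {C : ℝ}

private lemma myExistsBound (hF : Continuous F) (hlift : ∀ x, F (x + 1) = F x + 1) :
    ∃ C : ℝ, ∀ y, |F y - y| ≤ C := by
  obtain ⟨C, hC⟩ := isCompact_Icc.exists_bound_of_continuousOn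
    (f := fun y => F y - y) (s := Set.Icc (0:ℝ) 1) ((hF.sub continuous_id).continuousOn)
  refine ⟨C, fun y => ?_⟩
  have hper : Function.Periodic (fun y => F y - y) 1 := by
    intro z; simp only [hlift z]; ring
  have h1 : F y - y = F (Int.fract y) - Int.fract y := by
    have h2 := hper.sub_int_mul_eq (x := y) ⌊y⌋
    have h3 : y - (⌊y⌋ : ℝ) * 1 = Int.fract y := by rw [Int.fract]; ring
    rw [h3] at h2
    exact h2.symm
  rw [h1]
  have := hC (Int.fract y) ⟨Int.fract_nonneg y, (Int.fract_lt_one y).le⟩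
  simpa [Real.norm_eq_abs] using this

private lemma um_bddAbove (hC : ∀ y, |F y - y| ≤ C) (x : ℝ) : BddAbove (F '' Set.Iic x) := by
  refine ⟨x + C, ?_⟩
  rintro _ ⟨y, hy, rfl⟩
  have h1 : y ≤ x := hy
  have h2 := abs_le.1 (hC y)
  linarith [h2.2]

private lemma lm_bddBelow (hC : ∀ y, |F y - y| ≤ C) (x : ℝ) : BddBelow (F '' Set.Ici x) := by
  refine ⟨x - C, ?_⟩
  rintro _ ⟨y, hy, rfl⟩
  have h1 : x ≤ y := hy
  have h2 := abs_le.1 (hC y)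
  linarith [h2.1]

private lemma um_ne (x : ℝ) : (F '' Set.Iic x).Nonempty := ⟨F x, x, le_refl x, rfl⟩
private lemma lm_ne (x : ℝ) : (F '' Set.Ici x).Nonempty := ⟨F x, x, le_refl x, rfl⟩

private lemma le_um (hC : ∀ y, |F y - y| ≤ C) {y x : ℝ} (h : y ≤ x) : F y ≤ upperMap F x :=
  le_csSup (um_bddAbove hC x) ⟨y, h, rfl⟩

private lemma lm_le (hC : ∀ y, |F y - y| ≤ C) {y x : ℝ} (h : x ≤ y) : lowerMap F x ≤ F y :=
  csInf_le (lm_bddBelow hC x) ⟨y, h, rfl⟩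

private lemma um_mono (hC : ∀ y, |F y - y| ≤ C) : Monotone (upperMap F) := by
  intro u v huv
  exact csSup_le_csSup (um_bddAbove hC v) (um_ne u)
    (Set.image_mono (Set.Iic_subset_Iic.2 huv))

private lemma lm_mono (hC : ∀ y, |F y - y| ≤ C) : Monotone (lowerMap F) := by
  intro u v huv
  exact csInf_le_csInf (lm_bddBelow hC u) (lm_ne v)
    (Set.image_mono (Set.Ici_subset_Ici.2 huv))

private lemma um_add_one (hC : ∀ y, |F y - y| ≤ C) (hlift : ∀ x, F (x + 1) = F x + 1) (x : ℝ) :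
    upperMap F (x + 1) = upperMap F x + 1 := by
  show sSup (F '' Set.Iic (x + 1)) = upperMap F x + 1
  apply IsLUB.csSup_eq _ (um_ne _)
  constructor
  · rintro _ ⟨y, (hy : y ≤ x + 1), rfl⟩
    have h1 : F y = F (y - 1) + 1 := by rw [← hlift (y - 1)]; ring_nf
    have h2 : F (y - 1) ≤ upperMap F x := le_um hC (by linarith)
    linarith
  · intro b hb
    have h1 : upperMap F x ≤ b - 1 := by
      apply csSup_le (um_ne x)
      rintro _ ⟨y, (hy : y ≤ x), rfl⟩
      have h2 : F (y + 1) ≤ b := hb ⟨y + 1, by simp only [Set.mem_Iic]; linarith, rfl⟩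
      rw [hlift] at h2
      linarith
    linarith

private lemma lm_add_one (hC : ∀ y, |F y - y| ≤ C) (hlift : ∀ x, F (x + 1) = F x + 1) (x : ℝ) :
    lowerMap F (x + 1) = lowerMap F x + 1 := by
  show sInf (F '' Set.Ici (x + 1)) = lowerMap F x + 1
  apply IsGLB.csInf_eq _ (lm_ne _)
  constructor
  · rintro _ ⟨y, (hy : x + 1 ≤ y), rfl⟩
    have h1 : F y = F (y - 1) + 1 := by rw [← hlift (y - 1)]; ring_nf
    have h2 : lowerMap F x ≤ F (y - 1) := lm_le hC (by linarith)
    linarith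
  · intro b hb
    have h1 : b - 1 ≤ lowerMap F x := by
      apply le_csInf (lm_ne x)
      rintro _ ⟨y, (hy : x ≤ y), rfl⟩
      have h2 : b ≤ F (y + 1) := hb ⟨y + 1, by simp only [Set.mem_Ici]; linarith, rfl⟩
      rw [hlift] at h2
      linarith
    linarith

private lemma um_cont (hF : Continuous F) (hC : ∀ y, |F y - y| ≤ C) :
    Continuous (upperMap F) := by
  rw [continuous_iff_continuousAt]
  intro x
  rw [Metric.continuousAt_iff]
  intro ε hε
  have hK : IsCompact (Set.Icc (x - 2) (x + 2)) := isCompact_Icc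
  have hUC : UniformContinuousOn F (Set.Icc (x - 2) (x + 2)) :=
    hK.uniformContinuousOn_of_continuous hF.continuousOn
  rw [Metric.uniformContinuousOn_iff] at hUC
  obtain ⟨δ, hδ, hδ'⟩ := hUC (ε / 2) (by linarith)
  refine ⟨min δ 1, lt_min hδ one_pos, ?_⟩
  intro x' hx'
  have key : ∀ u v : ℝ, x - 1 ≤ u → u ≤ v → v ≤ x + 1 → v - u < δ →
      upperMap F v ≤ upperMap F u + ε / 2 := by
    intro u v hu huv hv hd
    apply csSup_le (um_ne v)
    rintro _ ⟨y, (hy : y ≤ v), rfl⟩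
    by_cases hyu : y ≤ u
    · have := le_um hC hyu
      linarith
    · push_neg at hyu
      have hyK : y ∈ Set.Icc (x - 2) (x + 2) := ⟨by linarith, by linarith⟩
      have huK : u ∈ Set.Icc (x - 2) (x + 2) := ⟨by linarith, by linarith⟩
      have hdist : dist y u < δ := by
        rw [Real.dist_eq, abs_of_pos (by linarith)]
        linarith
      have h1 := hδ' y hyK u huK hdist
      rw [Real.dist_eq] at h1
      have h2 := (abs_lt.1 h1).2
      have h3 : F u ≤ upperMap F u := le_um hC le_rfl
      linarith
  rw [Real.dist_eq] at hx' ⊢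
  have hd1 : |x' - x| < δ := lt_of_lt_of_le hx' (min_le_left _ _)
  have hd2 : |x' - x| < 1 := lt_of_lt_of_le hx' (min_le_right _ _)
  rw [abs_lt] at hd1 hd2
  rcases le_total x x' with h | h
  · have h1 := key x x' (by linarith) h (by linarith) (by linarith)
    have h2 := um_mono hC h
    rw [abs_lt]; constructor <;> linarith
  · have h1 := key x' x (by linarith) h (by linarith) (by linarith)
    have h2 := um_mono hC h
    rw [abs_lt]; constructor <;> linarith

private lemma lm_cont (hF : Continuous F) (hC : ∀ y, |F y - y| ≤ C) :
    Continuous (lowerMap F) := by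
  rw [continuous_iff_continuousAt]
  intro x
  rw [Metric.continuousAt_iff]
  intro ε hε
  have hK : IsCompact (Set.Icc (x - 2) (x + 2)) := isCompact_Icc
  have hUC : UniformContinuousOn F (Set.Icc (x - 2) (x + 2)) :=
    hK.uniformContinuousOn_of_continuous hF.continuousOn
  rw [Metric.uniformContinuousOn_iff] at hUC
  obtain ⟨δ, hδ, hδ'⟩ := hUC (ε / 2) (by linarith)
  refine ⟨min δ 1, lt_min hδ one_pos, ?_⟩
  intro x' hx'
  have key : ∀ u v : ℝ, x - 1 ≤ u → u ≤ v → v ≤ x + 1 → v - u < δ →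
      lowerMap F v - ε / 2 ≤ lowerMap F u := by
    intro u v hu huv hv hd
    apply le_csInf (lm_ne u)
    rintro _ ⟨y, (hy : u ≤ y), rfl⟩
    by_cases hyv : v ≤ y
    · have := lm_le hC hyv
      linarith
    · push_neg at hyv
      have hyK : y ∈ Set.Icc (x - 2) (x + 2) := ⟨by linarith, by linarith⟩
      have hvK : v ∈ Set.Icc (x - 2) (x + 2) := ⟨by linarith, by linarith⟩
      have hdist : dist y v < δ := by
        rw [Real.dist_eq, abs_of_neg (by linarith)]
        linarith
      have h1 := hδ' y hyK v hvK hdist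
      rw [Real.dist_eq] at h1
      have h2 := (abs_lt.1 h1).1
      have h3 : lowerMap F v ≤ F v := lm_le hC le_rfl
      linarith
  rw [Real.dist_eq] at hx' ⊢
  have hd1 : |x' - x| < δ := lt_of_lt_of_le hx' (min_le_left _ _)
  have hd2 : |x' - x| < 1 := lt_of_lt_of_le hx' (min_le_right _ _)
  rw [abs_lt] at hd1 hd2
  rcases le_total x x' with h | h
  · have h1 := key x x' (by linarith) h (by linarith) (by linarith)
    have h2 := lm_mono hC h
    rw [abs_lt]; constructor <;> linarith
  · have h1 := key x' x (by linarith) h (by linarith) (by linarith)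
    have h2 := lm_mono hC h
    rw [abs_lt]; constructor <;> linarith

private lemma iter_le_um (hC : ∀ y, |F y - y| ≤ C) (y : ℝ) :
    ∀ k : ℕ, F^[k] y ≤ (upperMap F)^[k] y := by
  intro k
  induction k with
  | zero => simp
  | succ k ih =>
    rw [Function.iterate_succ_apply', Function.iterate_succ_apply']
    calc F (F^[k] y) ≤ upperMap F (F^[k] y) := le_um hC le_rfl
      _ ≤ upperMap F ((upperMap F)^[k] y) := um_mono hC ih

private lemma lm_le_iter (hC : ∀ y, |F y - y| ≤ C) (y : ℝ) :
    ∀ k : ℕ, (lowerMap F)^[k] y ≤ F^[k] y := by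
  intro k
  induction k with
  | zero => simp
  | succ k ih =>
    rw [Function.iterate_succ_apply', Function.iterate_succ_apply']
    calc (lowerMap F) ((lowerMap F)^[k] y) ≤ lowerMap F (F^[k] y) := lm_mono hC ih
      _ ≤ F (F^[k] y) := lm_le hC le_rfl

private lemma orbit_times (F : ℝ → ℝ) (x : ℝ) (n : ℕ) (hn : 1 ≤ n) (hper : F^[n] x = x)
    (hbig : sSup (Set.range fun i : ℕ => F^[i] x) -
            sInf (Set.range fun i : ℕ => F^[i] x) > 1) :
    ∃ k k' : ℕ, 1 ≤ k ∧ k < n ∧ 1 ≤ k' ∧ k' < n ∧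
      F^[k] (sInf (Set.range fun i : ℕ => F^[i] x)) = sSup (Set.range fun i : ℕ => F^[i] x) ∧
      F^[k'] (sSup (Set.range fun i : ℕ => F^[i] x)) = sInf (Set.range fun i : ℕ => F^[i] x) := by
  have hn0 : 0 < n := hn
  set S := (Set.range fun i : ℕ => F^[i] x) with hS
  have horb : ∀ i, F^[i + n] x = F^[i] x := fun i => by
    rw [Function.iterate_add_apply, hper]
  have hmod : ∀ i, F^[i] x = F^[i % n] x := by
    have key : ∀ q r, F^[n * q + r] x = F^[r] x := by
      intro q
      induction q with
      | zero => simp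
      | succ q ih =>
        intro r
        have h : n * (q + 1) + r = (n * q + r) + n := by ring
        rw [h, horb, ih]
    intro i
    calc F^[i] x = F^[n * (i / n) + i % n] x := by rw [Nat.div_add_mod]
      _ = F^[i % n] x := key _ _
  have hSfin : S.Finite := by
    apply Set.Finite.subset ((Set.finite_Iio n).image fun i : ℕ => F^[i] x)
    rintro _ ⟨i, rfl⟩
    exact ⟨i % n, Nat.mod_lt i hn0, (hmod i).symm⟩
  have hSne : S.Nonempty := Set.range_nonempty _
  obtain ⟨j', hj'⟩ := hSne.csSup_mem hSfin
  obtain ⟨j, hj⟩ := hSne.csInf_mem hSfin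
  have step : ∀ a b : ℕ, ∃ k, k < n ∧ F^[k] (F^[a] x) = F^[b] x := by
    intro a b
    have han : a ≤ a * n := by
      calc a = a * 1 := (mul_one a).symm
        _ ≤ a * n := Nat.mul_le_mul_left a hn
    refine ⟨(b + a * n - a) % n, Nat.mod_lt _ hn0, ?_⟩
    have h2 : F^[(b + a * n - a) % n + a] x = F^[(b + a * n - a) % n] (F^[a] x) :=
      Function.iterate_add_apply F _ a x
    rw [← h2, hmod ((b + a * n - a) % n + a)]
    have h3 : ((b + a * n - a) % n + a) % n = (b + a * n - a + a) % n := Nat.mod_add_mod _ _ _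
    have h4 : b + a * n - a + a = b + a * n := by omega
    rw [h3, h4, Nat.add_mul_mod_self_right, ← hmod b]
  obtain ⟨k, hk, hkeq⟩ := step j j'
  obtain ⟨k', hk', hkeq'⟩ := step j' j
  simp only at hj hj'
  rw [hj, hj'] at hkeq
  rw [hj, hj'] at hkeq'
  have hk1 : 1 ≤ k := by
    rcases Nat.eq_zero_or_pos k with h | h
    · exfalso; rw [h] at hkeq; simp at hkeq; rw [hkeq] at hbig; linarith
    · exact h
  have hk'1 : 1 ≤ k' := by
    rcases Nat.eq_zero_or_pos k' with h | h
    · exfalso; rw [h] at hkeq'; simp at hkeq'; rw [hkeq'] at hbig; linarith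
    · exact h
  exact ⟨k, k', hk1, hk, hk'1, hk', hkeq, hkeq'⟩

end AuxULTN

/-- If `F` is a lifting of a degree one circle map with a periodic orbit of period `n`
and diameter larger than `1`, then the upper and lower maps `F_u`, `F_l` are continuous,
non-decreasing degree one liftings, their translation numbers exist, and
`τ(F_u) > 1/n` while `τ(F_l) < -1/n`. -/
theorem upper_lower_translation_numbers_of_large_orbit
    (F : ℝ → ℝ) (hF : Continuous F)
    (hlift : ∀ x, F (x + 1) = F x + 1)
    (x : ℝ) (n : ℕ) (hn : 1 ≤ n) (hper : F^[n] x = x)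
    (hexact : ∀ i, 1 ≤ i → i < n → F^[i] x ≠ x)
    (hbig : sSup (Set.range fun i : ℕ => F^[i] x) -
            sInf (Set.range fun i : ℕ => F^[i] x) > 1) :
    Continuous (upperMap F) ∧ Monotone (upperMap F) ∧
      (∀ y, upperMap F (y + 1) = upperMap F y + 1) ∧
    Continuous (lowerMap F) ∧ Monotone (lowerMap F) ∧
      (∀ y, lowerMap F (y + 1) = lowerMap F y + 1) ∧
    (∃ τu : ℝ,
      (∀ y : ℝ, Tendsto (fun j : ℕ => ((upperMap F)^[j] y - y) / j) atTop (𝓝 τu)) ∧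
      τu > 1 / n) ∧
    (∃ τl : ℝ,
      (∀ y : ℝ, Tendsto (fun j : ℕ => ((lowerMap F)^[j] y - y) / j) atTop (𝓝 τl)) ∧
      τl < -(1 / n)) := by
  obtain ⟨C, hC⟩ := myExistsBound hF hlift
  obtain ⟨k, k', hk1, hkn, hk'1, hk'n, hkm, hk'M⟩ := orbit_times F x n hn hper hbig
  set M := sSup (Set.range fun i : ℕ => F^[i] x) with hM
  set m := sInf (Set.range fun i : ℕ => F^[i] x) with hm
  refine ⟨um_cont hF hC, um_mono hC, um_add_one hC hlift,
    lm_cont hF hC, lm_mono hC, lm_add_one hC hlift, ?_, ?_⟩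
  · -- upper translation number
    set fu : CircleDeg1Lift := ⟨⟨upperMap F, um_mono hC⟩, um_add_one hC hlift⟩ with hfu
    have hcoe : ⇑fu = upperMap F := rfl
    refine ⟨fu.translationNumber, fun y => ?_, ?_⟩
    · refine (fu.tendsto_translationNumber y).congr fun j => ?_
      rw [CircleDeg1Lift.coe_pow, hcoe]
    · have hik : M ≤ (upperMap F)^[k] m := hkm ▸ iter_le_um hC m k
      have h1 : m + ((1 : ℤ) : ℝ) ≤ (fu ^ k) m := by
        rw [CircleDeg1Lift.coe_pow, hcoe]
        push_cast
        linarith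
      have h2 : ((1 : ℤ) : ℝ) ≤ (fu ^ k).translationNumber :=
        CircleDeg1Lift.le_translationNumber_of_add_int_le _ h1
      rw [CircleDeg1Lift.translationNumber_pow] at h2
      push_cast at h2
      have hk0 : (0 : ℝ) < k := by exact_mod_cast hk1
      have h3 : 1 / (k : ℝ) ≤ fu.translationNumber := by
        rw [div_le_iff₀ hk0]
        linarith [mul_comm (k : ℝ) fu.translationNumber]
      have h4 : 1 / (n : ℝ) < 1 / (k : ℝ) :=
        one_div_lt_one_div_of_lt hk0 (by exact_mod_cast hkn)
      linarith
  · -- lower translation number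
    set fl : CircleDeg1Lift := ⟨⟨lowerMap F, lm_mono hC⟩, lm_add_one hC hlift⟩ with hfl
    have hcoe : ⇑fl = lowerMap F := rfl
    refine ⟨fl.translationNumber, fun y => ?_, ?_⟩
    · refine (fl.tendsto_translationNumber y).congr fun j => ?_
      rw [CircleDeg1Lift.coe_pow, hcoe]
    · have hik : (lowerMap F)^[k'] M ≤ m := hk'M ▸ lm_le_iter hC M k'
      have h1 : (fl ^ k') M ≤ M + ((-1 : ℤ) : ℝ) := by
        rw [CircleDeg1Lift.coe_pow, hcoe]
        push_cast
        linarith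
      have h2 : (fl ^ k').translationNumber ≤ ((-1 : ℤ) : ℝ) :=
        CircleDeg1Lift.translationNumber_le_of_le_add_int _ h1
      rw [CircleDeg1Lift.translationNumber_pow] at h2
      push_cast at h2
      have hk0 : (0 : ℝ) < k' := by exact_mod_cast hk'1
      have h3 : fl.translationNumber ≤ (-1) / (k' : ℝ) := by
        rw [le_div_iff₀ hk0]
        linarith [mul_comm (k' : ℝ) fl.translationNumber]
      have h5 : ((-1 : ℝ)) / (k' : ℝ) = -(1 / (k' : ℝ)) := neg_div _ _
      have h4 : 1 / (n : ℝ) < 1 / (k' : ℝ) :=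
        one_div_lt_one_div_of_lt hk0 (by exact_mod_cast hk'n)
      linarith
end

section
/- Let f : ℝ/ℤ → ℝ/ℤ be a continuous circle map of degree d ≥ 1 and let F : ℝ → ℝ be a lifting of f, i.e., a continuous map with f ∘ π = π ∘ F where π : ℝ → ℝ/ℤ is the canonical projection (so F(x+1) = F(x) + d for all x). If there exists a periodic orbit P of F (as a self-map of ℝ) with max P − min P > 1, then for every integer m ≥ 1, f has a periodic point of exact period m. -/
/-- `y` is a periodic point of `g` of exact period `m`. -/
def HasExactPeriodPt {α : Type*} (g : α → α) (m : ℕ) (y : α) : Prop :=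
  g^[m] y = y ∧ ∀ i, 1 ≤ i → i < m → g^[i] y ≠ y

namespace CircleMapAux

variable {F : ℝ → ℝ} {d : ℤ}

lemma F_add_int (hdeg : ∀ x, F (x + 1) = F x + d) :
    ∀ (k : ℤ) (y : ℝ), F (y + (k : ℝ)) = F y + (k : ℝ) * (d : ℝ) := by
  intro k
  induction k using Int.induction_on with
  | zero => simp
  | succ i ih =>
      intro y
      have h1 : y + ((i : ℤ) + 1 : ℤ) = (y + (i : ℤ)) + 1 := by push_cast; ring
      rw [h1, hdeg, ih]
      push_cast; ring
  | pred i ih =>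
      intro y
      have h1 : (y + ((-(i:ℤ) - 1 : ℤ) : ℝ)) + 1 = y + ((-(i:ℤ) : ℤ) : ℝ) := by
        push_cast; ring
      have h2 := hdeg (y + ((-(i:ℤ) - 1 : ℤ) : ℝ))
      rw [h1, ih] at h2
      have h3 : F (y + ((-(i:ℤ) - 1 : ℤ) : ℝ)) = F y + ((-(i:ℤ) : ℤ) : ℝ) * d - d := by
        linarith
      rw [h3]; push_cast; ring

lemma iter_add_int (hdeg : ∀ x, F (x + 1) = F x + d) :
    ∀ (i : ℕ) (k : ℤ) (y : ℝ), F^[i] (y + (k : ℝ)) = F^[i] y + ((k * d ^ i : ℤ) : ℝ) := by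
  intro i
  induction i with
  | zero => intro k y; simp
  | succ i ih =>
      intro k y
      rw [Function.iterate_succ_apply, Function.iterate_succ_apply]
      have h1 : F (y + (k : ℝ)) = F y + ((k * d : ℤ) : ℝ) := by
        have := F_add_int hdeg k y; push_cast at this ⊢; linarith
      rw [h1, ih]
      push_cast; ring

lemma iter_proj {f : AddCircle (1:ℝ) → AddCircle (1:ℝ)}
    (hproj : ∀ x : ℝ, f (x : AddCircle (1:ℝ)) = ((F x : ℝ) : AddCircle (1:ℝ))) (i : ℕ) (y : ℝ) :
    f^[i] (y : AddCircle (1:ℝ)) = ((F^[i] y : ℝ) : AddCircle (1:ℝ)) := by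
  induction i with
  | zero => simp
  | succ i ih =>
      rw [Function.iterate_succ_apply', Function.iterate_succ_apply', ih, hproj]

lemma coe_eq_coe_iff' {a b : ℝ} :
    ((a : AddCircle (1:ℝ)) = (b : AddCircle (1:ℝ))) ↔ ∃ k : ℤ, b = a + k := by
  constructor
  · intro h
    have h2 : -a + b ∈ AddSubgroup.zmultiples (1:ℝ) := QuotientAddGroup.eq.mp h
    obtain ⟨k, hk⟩ := AddSubgroup.mem_zmultiples_iff.mp h2
    exact ⟨k, by simp at hk; linarith⟩
  · rintro ⟨k, rfl⟩
    rw [QuotientAddGroup.eq]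
    exact AddSubgroup.mem_zmultiples_iff.mpr ⟨k, by simp⟩

/-- translation along a translated-periodic point -/
lemma iter_translate (hdeg : ∀ x, F (x + 1) = F x + d)
    {y : ℝ} {i : ℕ} {k : ℤ} (h : F^[i] y = y + (k : ℝ)) :
    ∀ t : ℕ, F^[t * i] y = y + ((k * ∑ j ∈ Finset.range t, (d ^ i) ^ j : ℤ) : ℝ) := by
  intro t
  induction t with
  | zero => simp
  | succ t ih =>
      have h1 : (t + 1) * i = i + t * i := by ring
      rw [h1, Function.iterate_add_apply, ih, iter_add_int hdeg i _ y, h]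
      push_cast [geom_sum_succ]
      ring

/-- From a point `y` with `F^[m] y = y + 1` and degree `2 ≤ d`, the projection of `y`
has exact period `m`. -/
lemma exact_of_plus_one {f : AddCircle (1:ℝ) → AddCircle (1:ℝ)}
    (hproj : ∀ x : ℝ, f (x : AddCircle (1:ℝ)) = ((F x : ℝ) : AddCircle (1:ℝ)))
    (hdeg : ∀ x, F (x + 1) = F x + d) (hd2 : 2 ≤ d)
    (m : ℕ) (hm : 1 ≤ m) (y : ℝ) (hy : F^[m] y = y + 1) :
    HasExactPeriodPt f m ((y : ℝ) : AddCircle (1:ℝ)) := by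
  classical
  constructor
  · rw [iter_proj hproj, hy]
    exact (coe_eq_coe_iff'.mpr ⟨1, by push_cast; ring⟩).symm
  · intro i hi1 him heq
    rw [iter_proj hproj] at heq
    obtain ⟨k, hk⟩ := coe_eq_coe_iff'.mp heq
    -- hk : y = F^[i] y + k, so F^[i] y = y + (-k)
    have hex : ∃ j : ℕ, 1 ≤ j ∧ ∃ c : ℤ, F^[j] y = y + (c : ℝ) :=
      ⟨i, hi1, ⟨-k, by push_cast; linarith⟩⟩
    set i₀ := Nat.find hex with hi₀def
    obtain ⟨hi₀1, c₀, hc₀⟩ := Nat.find_spec hex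
    rw [← hi₀def] at hc₀ hi₀1
    have hi₀le : i₀ ≤ i := Nat.find_min' hex ⟨hi1, ⟨-k, by push_cast; linarith⟩⟩
    have hi₀pos : 0 < i₀ := hi₀1
    have hmult : ∀ t : ℕ,
        F^[t * i₀] y = y + ((c₀ * ∑ j ∈ Finset.range t, (d ^ i₀) ^ j : ℤ) : ℝ) :=
      iter_translate hdeg hc₀
    set q := m / i₀ with hqdef
    set r := m % i₀ with hrdef
    have hqr : r + i₀ * q = m := Nat.mod_add_div m i₀
    have hFm : F^[m] y
        = F^[r] y + (((c₀ * ∑ j ∈ Finset.range q, (d ^ i₀) ^ j) * d ^ r : ℤ) : ℝ) := by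
      conv_lhs => rw [← hqr]
      rw [Function.iterate_add_apply]
      rw [show i₀ * q = q * i₀ from Nat.mul_comm _ _, hmult q, iter_add_int hdeg]
    have hr0 : r = 0 := by
      by_contra hr
      have hr1 : 1 ≤ r := Nat.one_le_iff_ne_zero.mpr hr
      have hrlt : r < i₀ := Nat.mod_lt m hi₀pos
      have : F^[r] y = y + ((1 - (c₀ * ∑ j ∈ Finset.range q, (d ^ i₀) ^ j) * d ^ r : ℤ) : ℝ) := by
        rw [hy] at hFm
        push_cast at hFm ⊢
        linarith
      exact Nat.find_min hex hrlt ⟨hr1, ⟨_, this⟩⟩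
    have hiq : i₀ * q = m := by omega
    have hcS : c₀ * ∑ j ∈ Finset.range q, (d ^ i₀) ^ j = 1 := by
      have h2 : F^[m] y = y + ((c₀ * ∑ j ∈ Finset.range q, (d ^ i₀) ^ j : ℤ) : ℝ) := by
        rw [hFm, hr0]
        simp
      rw [hy] at h2
      have h3 : ((c₀ * ∑ j ∈ Finset.range q, (d ^ i₀) ^ j : ℤ) : ℝ) = ((1 : ℤ) : ℝ) := by
        push_cast at h2 ⊢
        linarith
      exact_mod_cast h3
    have hq2 : 2 ≤ q := by
      rcases Nat.lt_or_ge q 2 with h | h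
      · interval_cases q
        · omega
        · omega
      · exact h
    have hD2 : (2 : ℤ) ≤ d ^ i₀ := le_trans hd2 (le_self_pow₀ (by omega) (by omega))
    have hS3 : (3 : ℤ) ≤ ∑ j ∈ Finset.range q, (d ^ i₀) ^ j := by
      have hsub : ({0, 1} : Finset ℕ) ⊆ Finset.range q := by
        intro s hs
        simp only [Finset.mem_insert, Finset.mem_singleton] at hs
        rcases hs with rfl | rfl <;> simp [Finset.mem_range] <;> omega
      have hnn : ∀ s ∈ Finset.range q, s ∉ ({0, 1} : Finset ℕ) → (0 : ℤ) ≤ (d ^ i₀) ^ s :=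
        fun s _ _ => pow_nonneg (by linarith) _
      have h01 : ∑ j ∈ ({0, 1} : Finset ℕ), (d ^ i₀) ^ j = 1 + d ^ i₀ := by
        rw [Finset.sum_pair (by norm_num)]
        simp
      calc (3 : ℤ) ≤ 1 + d ^ i₀ := by linarith
        _ = ∑ j ∈ ({0, 1} : Finset ℕ), (d ^ i₀) ^ j := h01.symm
        _ ≤ ∑ j ∈ Finset.range q, (d ^ i₀) ^ j :=
            Finset.sum_le_sum_of_subset_of_nonneg hsub hnn
    rcases lt_trichotomy c₀ 0 with h | h | h
    · nlinarith
    · rw [h] at hcS; simp at hcS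
    · nlinarith

/-- Oriented pullback. -/
lemma pullback_oriented (hF : Continuous F) {s t a b : ℝ}
    (hst : s ≤ t) (hab : a ≤ b) (hFs : F s = a) (hFt : F t = b) :
    ∃ c' d', s ≤ c' ∧ c' ≤ d' ∧ d' ≤ t ∧ F '' Set.Icc c' d' = Set.Icc a b ∧
      F c' = a ∧ F d' = b := by
  classical
  set D : Set ℝ := {y | y ∈ Set.Icc s t ∧ F y = b} with hD
  have hDne : D.Nonempty := ⟨t, ⟨hst, le_refl t⟩, hFt⟩
  have hDclosed : IsClosed D := by
    have h1 : IsClosed {y | F y = b} := isClosed_eq hF continuous_const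
    have : D = Set.Icc s t ∩ {y | F y = b} := rfl
    rw [this]; exact isClosed_Icc.inter h1
  have hDbdd : BddBelow D := ⟨s, fun y hy => hy.1.1⟩
  set d' := sInf D with hd'
  have hd'mem : d' ∈ D := hDclosed.csInf_mem hDne hDbdd
  have hd'min : ∀ y ∈ D, d' ≤ y := fun y hy => csInf_le hDbdd hy
  set C : Set ℝ := {y | y ∈ Set.Icc s d' ∧ F y = a} with hC
  have hCne : C.Nonempty := ⟨s, ⟨le_refl s, hd'mem.1.1⟩, hFs⟩
  have hCclosed : IsClosed C := by
    have h1 : IsClosed {y | F y = a} := isClosed_eq hF continuous_const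
    have : C = Set.Icc s d' ∩ {y | F y = a} := rfl
    rw [this]; exact isClosed_Icc.inter h1
  have hCbdd : BddAbove C := ⟨d', fun y hy => hy.1.2⟩
  set c' := sSup C with hc'
  have hc'mem : c' ∈ C := hCclosed.csSup_mem hCne hCbdd
  have hc'max : ∀ y ∈ C, y ≤ c' := fun y hy => le_csSup hCbdd hy
  have hsc' : s ≤ c' := hc'mem.1.1
  have hc'd' : c' ≤ d' := hc'mem.1.2
  have hd't : d' ≤ t := hd'mem.1.2
  have hFc' : F c' = a := hc'mem.2
  have hFd' : F d' = b := hd'mem.2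
  refine ⟨c', d', hsc', hc'd', hd't, ?_, hFc', hFd'⟩
  apply Set.Subset.antisymm
  · rintro w ⟨y, hy, rfl⟩
    constructor
    · by_contra hlt
      push_neg at hlt
      have hyne : y ≠ c' := by intro h; rw [h, hFc'] at hlt; linarith
      have hy1 : c' < y := lt_of_le_of_ne hy.1 (Ne.symm hyne)
      have hsub := intermediate_value_Icc hy.2 hF.continuousOn
      have : a ∈ Set.Icc (F y) (F d') := ⟨le_of_lt hlt, by rw [hFd']; exact hab⟩
      obtain ⟨y', hy', hFy'⟩ := hsub this
      have hmem : y' ∈ C := ⟨⟨le_trans hsc' (le_trans (le_of_lt hy1) hy'.1),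
        hy'.2⟩, hFy'⟩
      have h5 := hc'max y' hmem
      have h6 : c' < y' := lt_of_lt_of_le hy1 hy'.1
      linarith
    · by_contra hlt
      push_neg at hlt
      have hyne : y ≠ d' := by intro h; rw [h, hFd'] at hlt; linarith
      have hy2 : y < d' := lt_of_le_of_ne hy.2 hyne
      have hsub := intermediate_value_Icc hy.1 hF.continuousOn
      have : b ∈ Set.Icc (F c') (F y) := ⟨by rw [hFc']; exact hab, le_of_lt hlt⟩
      obtain ⟨y', hy', hFy'⟩ := hsub this
      have hmem : y' ∈ D := ⟨⟨le_trans hsc' hy'.1,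
        le_trans hy'.2 (le_trans (le_of_lt hy2) hd't)⟩, hFy'⟩
      have h5 := hd'min y' hmem
      have h6 : y' < d' := lt_of_le_of_lt hy'.2 hy2
      linarith
  · have h := intermediate_value_Icc hc'd' hF.continuousOn
    rw [hFc', hFd'] at h
    exact h

lemma pullback_exists (hF : Continuous F) {a b c d' : ℝ}
    (hcd : c ≤ d') (hab : a ≤ b) (hcov : Set.Icc a b ⊆ F '' Set.Icc c d') :
    ∃ c' e', c ≤ c' ∧ c' ≤ e' ∧ e' ≤ d' ∧ F '' Set.Icc c' e' = Set.Icc a b ∧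
      ((F c' = a ∧ F e' = b) ∨ (F c' = b ∧ F e' = a)) := by
  obtain ⟨s, hs, hFs⟩ := hcov (Set.left_mem_Icc.mpr hab)
  obtain ⟨t, ht, hFt⟩ := hcov (Set.right_mem_Icc.mpr hab)
  rcases le_total s t with hst | hts
  · obtain ⟨c', e', h1, h2, h3, h4, h5, h6⟩ := pullback_oriented hF hst hab hFs hFt
    exact ⟨c', e', le_trans hs.1 h1, h2, le_trans h3 ht.2, h4, Or.inl ⟨h5, h6⟩⟩
  · set G : ℝ → ℝ := fun y => F (-y) with hG
    have hGc : Continuous G := hF.comp continuous_neg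
    have hGs : G (-s) = a := by simp [hG, hFs]
    have hGt : G (-t) = b := by simp [hG, hFt]
    obtain ⟨c'', d'', h1, h2, h3, h4, h5, h6⟩ :=
      pullback_oriented hGc (neg_le_neg hts) hab hGs hGt
    refine ⟨-d'', -c'', ?_, by linarith, ?_, ?_, Or.inr ⟨?_, ?_⟩⟩
    · have h7 : d'' ≤ -t := h3
      have h8 := ht.1
      linarith
    · have h7 : -s ≤ c'' := h1
      have h8 := hs.2
      linarith
    · rw [← h4]
      have hneg : ((fun y : ℝ => -y) '' Set.Icc c'' d'') = Set.Icc (-d'') (-c'') := by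
        ext w
        simp only [Set.mem_image, Set.mem_Icc]
        constructor
        · rintro ⟨v, hv, rfl⟩; constructor <;> linarith [hv.1, hv.2]
        · intro hw; exact ⟨-w, ⟨by linarith [hw.2], by linarith [hw.1]⟩, by ring⟩
      have himg : G '' Set.Icc c'' d'' = F '' ((fun y : ℝ => -y) '' Set.Icc c'' d'') := by
        rw [← Set.image_comp]
        rfl
      rw [himg, hneg]
    · have h6' : F (- d'') = b := h6
      exact h6'
    · have h5' : F (- c'') = a := h5
      simpa using h5'

lemma chain_exists (hF : Continuous F) {C₁ C₂ C₃ : ℝ}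
    (h12 : C₁ ≤ C₂) (h23 : C₂ ≤ C₃)
    (hcov1 : Set.Icc C₁ C₃ ⊆ F '' Set.Icc C₁ C₂)
    (hcov2 : Set.Icc C₁ C₃ ⊆ F '' Set.Icc C₂ C₃) :
    ∀ (j : ℕ) (u v : ℝ), C₁ ≤ u → u ≤ v → v ≤ C₃ →
    ∃ α β, α ≤ β ∧
      (∀ r : ℕ, r < j → F^[r] '' Set.Icc α β ⊆ Set.Icc C₁ C₂) ∧
      (F^[j] '' Set.Icc α β ⊆ Set.Icc C₂ C₃) ∧
      F^[j+1] '' Set.Icc α β = Set.Icc u v ∧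
      ((F^[j+1] α = u ∧ F^[j+1] β = v) ∨ (F^[j+1] α = v ∧ F^[j+1] β = u)) := by
  intro j
  induction j with
  | zero =>
      intro u v hu huv hv
      obtain ⟨α, β, h1, h2, h3, h4, h5⟩ := pullback_exists hF h23 huv
        (le_trans (Set.Icc_subset_Icc hu hv) hcov2)
      refine ⟨α, β, h2, fun r hr => absurd hr (Nat.not_lt_zero r), ?_, ?_, ?_⟩
      · simpa using Set.Icc_subset_Icc h1 h3
      · simpa using h4
      · simpa using h5
  | succ j ih =>
      intro u v hu huv hv
      obtain ⟨α, β, hαβ, hitin, hlast, himg, hends⟩ := ih u v hu huv hv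
      have hsub : Set.Icc α β ⊆ Set.Icc C₁ C₃ := by
        rcases Nat.eq_zero_or_pos j with hj | hj
        · subst hj
          intro y hy
          have hmem : F^[0] y ∈ F^[0] '' Set.Icc α β := Set.mem_image_of_mem _ hy
          have h2 := hlast hmem
          simp only [Function.iterate_zero_apply] at h2
          exact Set.Icc_subset_Icc h12 le_rfl h2
        · intro y hy
          have hmem : F^[0] y ∈ F^[0] '' Set.Icc α β := Set.mem_image_of_mem _ hy
          have h2 := hitin 0 hj hmem
          simp only [Function.iterate_zero_apply] at h2
          exact Set.Icc_subset_Icc le_rfl h23 h2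
      have hαC : α ∈ Set.Icc C₁ C₃ := hsub ⟨le_refl α, hαβ⟩
      have hβC : β ∈ Set.Icc C₁ C₃ := hsub ⟨hαβ, le_refl β⟩
      obtain ⟨α', β', g1, g2, g3, g4, g5⟩ := pullback_exists hF h12 hαβ
        (le_trans (Set.Icc_subset_Icc hαC.1 hβC.2) hcov1)
      have hstep : ∀ (r : ℕ), F^[r+1] '' Set.Icc α' β' = F^[r] '' Set.Icc α β := by
        intro r
        rw [Function.iterate_succ]
        rw [Set.image_comp]
        rw [g4]
      refine ⟨α', β', g2, ?_, ?_, ?_, ?_⟩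
      · intro r hr
        rcases Nat.eq_zero_or_pos r with h0 | h0
        · subst h0
          simpa using Set.Icc_subset_Icc g1 g3
        · obtain ⟨r', rfl⟩ := Nat.exists_eq_succ_of_ne_zero (Nat.pos_iff_ne_zero.mp h0)
          rw [hstep r']
          exact hitin r' (by omega)
      · rw [hstep j]
        exact hlast
      · rw [hstep (j+1)]
        exact himg
      · have hα' : F^[j+1+1] α' = F^[j+1] (F α') := by
          rw [Function.iterate_succ_apply]
        have hβ' : F^[j+1+1] β' = F^[j+1] (F β') := by
          rw [Function.iterate_succ_apply]
        rcases g5 with ⟨ga, gb⟩ | ⟨ga, gb⟩ <;> rcases hends with ⟨ha, hb⟩ | ⟨ha, hb⟩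
        · exact Or.inl ⟨by rw [hα', ga, ha], by rw [hβ', gb, hb]⟩
        · exact Or.inr ⟨by rw [hα', ga, ha], by rw [hβ', gb, hb]⟩
        · exact Or.inr ⟨by rw [hα', ga, hb], by rw [hβ', gb, ha]⟩
        · exact Or.inl ⟨by rw [hα', ga, hb], by rw [hβ', gb, ha]⟩

lemma horseshoe_all_periods {f : AddCircle (1:ℝ) → AddCircle (1:ℝ)}
    (hF : Continuous F)
    (hproj : ∀ x : ℝ, f (x : AddCircle (1:ℝ)) = ((F x : ℝ) : AddCircle (1:ℝ)))
    (hd : 1 ≤ d) (hdeg : ∀ x, F (x + 1) = F x + d)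
    {C₁ C₂ C₃ : ℝ} (h12 : C₁ < C₂) (h23 : C₂ < C₃)
    (hpat : (F C₂ ≤ C₁ ∧ C₃ ≤ F C₁ ∧ C₃ ≤ F C₃) ∨ (C₃ ≤ F C₂ ∧ F C₁ ≤ C₁ ∧ F C₃ ≤ C₁))
    (m : ℕ) (hm : 2 ≤ m) :
    ∃ y : AddCircle (1:ℝ), HasExactPeriodPt f m y := by
  classical
  have hcov1 : Set.Icc C₁ C₃ ⊆ F '' Set.Icc C₁ C₂ := by
    rcases hpat with ⟨p1, p2, _⟩ | ⟨p1, p2, _⟩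
    · exact le_trans (Set.Icc_subset_Icc p1 p2)
        (intermediate_value_Icc' (le_of_lt h12) hF.continuousOn)
    · exact le_trans (Set.Icc_subset_Icc p2 p1)
        (intermediate_value_Icc (le_of_lt h12) hF.continuousOn)
  have hcov2 : Set.Icc C₁ C₃ ⊆ F '' Set.Icc C₂ C₃ := by
    rcases hpat with ⟨p1, _, p3⟩ | ⟨p1, _, p3⟩
    · exact le_trans (Set.Icc_subset_Icc p1 p3)
        (intermediate_value_Icc (le_of_lt h23) hF.continuousOn)
    · exact le_trans (Set.Icc_subset_Icc p3 p1)
        (intermediate_value_Icc' (le_of_lt h23) hF.continuousOn)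
  obtain ⟨α, β, hαβ, hitin, hlast, himg, hends⟩ :=
    chain_exists hF (le_of_lt h12) (le_of_lt h23) hcov1 hcov2 (m - 1) C₁ C₃
      (le_refl C₁) (by linarith) (le_refl C₃)
  have hm1 : m - 1 + 1 = m := by omega
  rw [hm1] at himg hends
  have hαβK : Set.Icc α β ⊆ Set.Icc C₁ C₂ := by
    intro y hy
    have hmem : F^[0] y ∈ F^[0] '' Set.Icc α β := Set.mem_image_of_mem _ hy
    have h2 := hitin 0 (by omega) hmem
    simpa using h2
  have hαK := hαβK ⟨le_refl α, hαβ⟩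
  have hβK := hαβK ⟨hαβ, le_refl β⟩
  have hgc : Continuous fun y => F^[m] y - y := (hF.iterate m).sub continuous_id
  obtain ⟨y, hyI, hy⟩ : ∃ y ∈ Set.Icc α β, F^[m] y - y = 0 := by
    rcases hends with ⟨ha, hb⟩ | ⟨ha, hb⟩
    · have h1 : F^[m] α - α ≤ 0 := by rw [ha]; linarith [hαK.1]
      have h2 : 0 ≤ F^[m] β - β := by rw [hb]; linarith [hβK.2, h23]
      have h3 := intermediate_value_Icc hαβ hgc.continuousOn (a := α) (b := β)
        (f := fun y => F^[m] y - y) ⟨h1, h2⟩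
      obtain ⟨y, hyI, hy⟩ := h3
      exact ⟨y, hyI, hy⟩
    · have h1 : 0 ≤ F^[m] α - α := by rw [ha]; linarith [hαK.2, h23]
      have h2 : F^[m] β - β ≤ 0 := by rw [hb]; linarith [hβK.1]
      have h3 := intermediate_value_Icc' hαβ hgc.continuousOn (a := α) (b := β)
        (f := fun y => F^[m] y - y) ⟨h2, h1⟩
      obtain ⟨y, hyI, hy⟩ := h3
      exact ⟨y, hyI, hy⟩
  have hyfix : F^[m] y = y := by linarith [hy]
  have hyK1 : ∀ r : ℕ, r < m - 1 → F^[r] y ∈ Set.Icc C₁ C₂ :=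
    fun r hr => hitin r hr (Set.mem_image_of_mem _ hyI)
  have hyK2 : F^[m-1] y ∈ Set.Icc C₂ C₃ := hlast (Set.mem_image_of_mem _ hyI)
  refine ⟨(y : AddCircle (1:ℝ)), ?_, ?_⟩
  · rw [iter_proj hproj, hyfix]
  · intro i hi1 him heq
    rw [iter_proj hproj] at heq
    obtain ⟨k, hk⟩ := coe_eq_coe_iff'.mp heq.symm
    have hms : ∀ s : ℕ, F^[m * s] y = y := by
      intro s
      induction s with
      | zero => simp
      | succ s ih => rw [Nat.mul_succ, Function.iterate_add_apply, hyfix, ih]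
    have hcol := iter_translate hdeg hk m
    rw [hms i] at hcol
    have hzero : (k * ∑ j ∈ Finset.range m, (d ^ i) ^ j : ℤ) = 0 := by
      have h0 : ((k * ∑ j ∈ Finset.range m, (d ^ i) ^ j : ℤ) : ℝ) = 0 := by linarith [hcol]
      exact_mod_cast h0
    have hSpos : 0 < ∑ j ∈ Finset.range m, (d ^ i) ^ j := by
      apply Finset.sum_pos
      · intro j _
        positivity
      · exact ⟨0, Finset.mem_range.mpr (by omega)⟩
    have hk0 : k = 0 := by
      rcases mul_eq_zero.mp hzero with h | h
      · omega
      · omega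
    have hfixi : F^[i] y = y := by rw [hk, hk0]; simp
    have hcomm : F^[(i-1) + m] y = F^[(m-1) + i] y := by
      congr 1
      omega
    have hL : F^[(i-1) + m] y = F^[i-1] y := by
      rw [Function.iterate_add_apply, hyfix]
    have hR : F^[(m-1) + i] y = F^[m-1] y := by
      rw [Function.iterate_add_apply, hfixi]
    have hE : F^[i-1] y = F^[m-1] y := by rw [← hL, hcomm, hR]
    have hmem1 : F^[i-1] y ∈ Set.Icc C₁ C₂ := hyK1 (i-1) (by omega)
    have hC2 : F^[m-1] y = C₂ := le_antisymm (by rw [← hE]; exact hmem1.2) hyK2.1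
    have hFC2 : F^[m] y = F C₂ := by
      have h4 : m = (m - 1) + 1 := by omega
      rw [h4, Function.iterate_succ_apply', hC2]
    have hyval : y = F C₂ := by rw [← hyfix, hFC2]
    have hyK : y ∈ Set.Icc C₁ C₂ := hαβK hyI
    rcases hpat with ⟨p1, p2, p3⟩ | ⟨p1, p2, p3⟩
    · have hyC1 : y = C₁ := le_antisymm (by rw [hyval]; exact p1) hyK.1
      have hFy : C₃ ≤ F^[1] y := by
        rw [Function.iterate_one, hyC1]; exact p2
      rcases Nat.lt_or_ge 1 (m - 1) with hcase | hcase
      · have := (hyK1 1 hcase).2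
        linarith
      · have h1m : (1 : ℕ) = m - 1 := by omega
        have hin2 : F^[1] y ∈ Set.Icc C₂ C₃ := by rw [h1m]; exact hyK2
        have hFyC3 : F^[1] y = C₃ := le_antisymm hin2.2 hFy
        have h2 : F^[1+1] y = F C₃ := by
          rw [Function.iterate_succ_apply', hFyC3]
        have h3 : (1:ℕ)+1 = m := by omega
        rw [h3, hyfix] at h2
        rw [← h2] at p3
        linarith
    · have h5 : C₃ ≤ y := by rw [hyval]; exact p1
      linarith [hyK.2]

lemma confine_up (htrans : ∀ (y : ℝ) (j : ℤ), F (y + (j:ℝ)) = F y + j)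
    {z a b : ℝ} (hinv : ∀ y, z < y → z < F y)
    (hab : ∃ k : ℕ, F^[k] a = b) (hba : ∃ k : ℕ, F^[k] b = a) : b - a < 1 := by
  set j : ℤ := ⌈a - z⌉ - 1 with hj
  have h1 : z + (j:ℝ) < a := by
    have := Int.ceil_lt_add_one (a - z)
    rw [hj]; push_cast; linarith
  have h2 : a ≤ z + (j:ℝ) + 1 := by
    have := Int.le_ceil (a - z)
    rw [hj]; push_cast; linarith
  have hinvj : ∀ (c : ℤ) (y : ℝ), z + (c:ℝ) < y → z + (c:ℝ) < F y := by
    intro c y hy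
    have h3 := hinv (y - c) (by linarith)
    have h4 := htrans (y - (c:ℝ)) c
    rw [show y - (c:ℝ) + (c:ℝ) = y by ring] at h4
    linarith
  have hit : ∀ (c : ℤ) (p : ℝ), z + (c:ℝ) < p → ∀ k : ℕ, z + (c:ℝ) < F^[k] p := by
    intro c p hp k
    induction k with
    | zero => simpa
    | succ k ih => rw [Function.iterate_succ_apply']; exact hinvj c _ ih
  obtain ⟨k1, hk1⟩ := hab
  by_contra hcon
  push_neg at hcon
  have hb2 : z + ((j+1 : ℤ):ℝ) < b := by
    have h5 := hit j a h1 k1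
    rw [hk1] at h5
    push_cast
    linarith
  obtain ⟨k2, hk2⟩ := hba
  have ha2 : z + ((j+1 : ℤ):ℝ) < a := by
    have h5 := hit (j+1) b hb2 k2
    rwa [hk2] at h5
  push_cast at ha2
  linarith

lemma confine_down (htrans : ∀ (y : ℝ) (j : ℤ), F (y + (j:ℝ)) = F y + j)
    {z a b : ℝ} (hinv : ∀ y, y < z → F y < z)
    (hab : ∃ k : ℕ, F^[k] a = b) : b - a < 1 := by
  set j : ℤ := ⌊b - z⌋ + 1 with hj
  have h1 : b < z + (j:ℝ) := by
    have := Int.lt_floor_add_one (b - z)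
    rw [hj]; push_cast; linarith
  have h2 : z + (j:ℝ) - 1 ≤ b := by
    have := Int.floor_le (b - z)
    rw [hj]; push_cast; linarith
  have hinvj : ∀ (c : ℤ) (y : ℝ), y < z + (c:ℝ) → F y < z + (c:ℝ) := by
    intro c y hy
    have h3 := hinv (y - c) (by linarith)
    have h4 := htrans (y - (c:ℝ)) c
    rw [show y - (c:ℝ) + (c:ℝ) = y by ring] at h4
    linarith
  have hit : ∀ (c : ℤ) (p : ℝ), p < z + (c:ℝ) → ∀ k : ℕ, F^[k] p < z + (c:ℝ) := by
    intro c p hp k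
    induction k with
    | zero => simpa
    | succ k ih => rw [Function.iterate_succ_apply']; exact hinvj c _ ih
  obtain ⟨k1, hk1⟩ := hab
  by_contra hcon
  push_neg at hcon
  have ha2 : a < z + ((j - 1 : ℤ):ℝ) := by
    push_cast
    linarith
  have hb3 : b < z + ((j-1 : ℤ):ℝ) := by
    have h5 := hit (j-1) a ha2 k1
    rwa [hk1] at h5
  push_cast at hb3
  linarith

lemma orbit_trap {u v : ℝ}
    (hinv : ∀ y, u < y → y < v → u < F y ∧ F y < v)
    {a b : ℝ} (ha1 : u < a) (ha2 : a < v) (hab : ∃ k : ℕ, F^[k] a = b) :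
    u < b ∧ b < v := by
  obtain ⟨k, hk⟩ := hab
  subst hk
  induction k with
  | zero => exact ⟨ha1, ha2⟩
  | succ k ih =>
      rw [Function.iterate_succ_apply']
      exact hinv _ ih.1 ih.2

end CircleMapAux

open CircleMapAux in
/-- If `f` is a continuous circle map of degree `d ≥ 1` with lifting `F`, and `F` has a
periodic orbit `P` (as a self-map of `ℝ`) with `max P - min P > 1`, then `f` has periodic
points of all exact periods. -/
theorem circle_map_periods_of_large_orbit_of_lifting
    (f : AddCircle (1 : ℝ) → AddCircle (1 : ℝ)) (hf : Continuous f)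
    (F : ℝ → ℝ) (hF : Continuous F)
    (hproj : ∀ x : ℝ, f (x : AddCircle (1 : ℝ)) = ((F x : ℝ) : AddCircle (1 : ℝ)))
    (d : ℤ) (hd : 1 ≤ d) (hdeg : ∀ x, F (x + 1) = F x + d)
    (x : ℝ) (n : ℕ) (hn : 1 ≤ n) (hper : F^[n] x = x)
    (hbig : sSup (Set.range fun i : ℕ => F^[i] x) -
            sInf (Set.range fun i : ℕ => F^[i] x) > 1) :
    ∀ m : ℕ, 1 ≤ m → ∃ y : AddCircle (1 : ℝ), HasExactPeriodPt f m y := by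
  classical
  intro m hm
  -- ====== common orbit setup ======
  set O : Finset ℝ := (Finset.range n).image (fun i => F^[i] x) with hO
  have hOne : O.Nonempty := by
    refine ⟨x, ?_⟩
    rw [hO]
    exact Finset.mem_image.mpr ⟨0, Finset.mem_range.mpr (by omega), by simp⟩
  have hiter_nq : ∀ q : ℕ, F^[n * q] x = x := by
    intro q
    induction q with
    | zero => simp
    | succ q ih => rw [Nat.mul_succ, Function.iterate_add_apply, hper, ih]
  have hmem : ∀ j : ℕ, F^[j] x ∈ O := by
    intro j
    have h1 : F^[j] x = F^[j % n] x := by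
      conv_lhs => rw [← Nat.mod_add_div j n]
      rw [Function.iterate_add_apply, hiter_nq]
    rw [h1, hO]
    exact Finset.mem_image.mpr ⟨j % n, Finset.mem_range.mpr (Nat.mod_lt _ (by omega)), rfl⟩
  have hrep : ∀ p ∈ O, ∃ i, i < n ∧ F^[i] x = p := by
    intro p hp
    have hp' : p ∈ Finset.image (fun i => F^[i] x) (Finset.range n) := hp
    obtain ⟨i, hi, hix⟩ := Finset.mem_image.mp hp'
    exact ⟨i, Finset.mem_range.mp hi, hix⟩
  have hreach : ∀ p ∈ O, ∀ q ∈ O, ∃ k : ℕ, F^[k] p = q := by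
    intro p hp q hq
    obtain ⟨i, hi, rfl⟩ := hrep p hp
    obtain ⟨j, hj, rfl⟩ := hrep q hq
    refine ⟨n - i + j, ?_⟩
    rw [← Function.iterate_add_apply]
    have h1 : n - i + j + i = j + n := by omega
    rw [h1, Function.iterate_add_apply, hper]
  by_cases hd2 : 2 ≤ d
  · -- ====== degree at least two ======
    obtain ⟨i₀, hi₀n, hp⟩ : ∃ i₀, i₀ ∈ Finset.range n ∧ F^[i₀] x = O.max' hOne := by
      have h : O.max' hOne ∈ Finset.image (fun i => F^[i] x) (Finset.range n) :=
        O.max'_mem hOne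
      simpa [Finset.mem_image] using h
    set p := O.max' hOne with hpdef
    have hFm_p : F^[m] p ≤ p := by
      have h1 : F^[m] p = F^[m + i₀] x := by
        rw [← hp, ← Function.iterate_add_apply]
      rw [h1]
      exact O.le_max' _ (hmem _)
    obtain ⟨K₀, hK₀⟩ := exists_nat_ge (1 + p - F^[m] p)
    set K : ℕ := max K₀ 1 with hKdef
    have hK1 : 1 ≤ (K : ℝ) := by
      have h2 : (1:ℕ) ≤ K := le_max_right _ _
      exact_mod_cast h2
    have hKbig : 1 + p - F^[m] p ≤ (K : ℝ) := by
      have h2 : (K₀ : ℝ) ≤ K := by exact_mod_cast le_max_left K₀ 1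
      linarith
    have hdm : (2 : ℤ) ≤ d ^ m := le_trans hd2 (le_self_pow₀ (by omega) (by omega))
    set φ : ℝ → ℝ := fun y => F^[m] y - y with hφ
    have hcont : Continuous φ := (hF.iterate m).sub continuous_id
    have hφp : φ p ≤ 0 := by simp only [hφ]; linarith
    have hφpK : 1 ≤ φ (p + (K:ℝ)) := by
      have h1 : F^[m] (p + ((K : ℤ) : ℝ)) = F^[m] p + (((K : ℤ) * d ^ m : ℤ) : ℝ) :=
        iter_add_int hdeg m (K : ℤ) p
      have h2 : φ (p + (K:ℝ)) = (F^[m] p - p) + (K : ℝ) * ((d:ℝ) ^ m - 1) := by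
        simp only [hφ]
        push_cast at h1
        rw [h1]
        ring
      have h3 : (2:ℝ) ≤ (d:ℝ) ^ m := by exact_mod_cast hdm
      have h4 : (K : ℝ) * 1 ≤ (K : ℝ) * ((d:ℝ) ^ m - 1) := by
        apply mul_le_mul_of_nonneg_left _ (by linarith)
        linarith
      rw [h2]
      linarith
    have hmemIcc : (1:ℝ) ∈ Set.Icc (φ p) (φ (p + (K:ℝ))) := ⟨by linarith, by linarith⟩
    have hsub := intermediate_value_Icc (by linarith : p ≤ p + (K:ℝ)) hcont.continuousOn
    obtain ⟨y, _, hy⟩ := hsub hmemIcc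
    have hy' : F^[m] y = y + 1 := by
      have : F^[m] y - y = 1 := hy
      linarith
    exact ⟨(y : AddCircle (1:ℝ)), exact_of_plus_one hproj hdeg hd2 m hm y hy'⟩
  · -- ====== degree one ======
    have hd1 : d = 1 := by omega
    set a := O.min' hOne with ha
    set b := O.max' hOne with hb
    have hrange : (Set.range fun i : ℕ => F^[i] x) = ↑O := by
      ext y
      constructor
      · rintro ⟨i, rfl⟩
        exact hmem i
      · intro hy
        have hy' : y ∈ O := hy
        obtain ⟨i, _, rfl⟩ := hrep y hy'
        exact ⟨i, rfl⟩
    have hba : 1 < b - a := by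
      rw [hrange, hOne.csSup_eq_max', hOne.csInf_eq_min'] at hbig
      exact hbig
    have haO : a ∈ O := O.min'_mem hOne
    have hbO : b ∈ O := O.max'_mem hOne
    have hFmem : ∀ p ∈ O, F p ∈ O := by
      intro p hp
      obtain ⟨i, hi, rfl⟩ := hrep p hp
      have h1 : F (F^[i] x) = F^[i+1] x := (Function.iterate_succ_apply' F i x).symm
      rw [h1]
      exact hmem _
    have hFa_ge : a ≤ F a := O.min'_le _ (hFmem a haO)
    have hFb_le : F b ≤ b := O.le_max' _ (hFmem b hbO)
    have hFa : a < F a := by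
      rcases eq_or_lt_of_le hFa_ge with h | h
      · exfalso
        have hfix : ∀ k : ℕ, F^[k] a = a := by
          intro k
          induction k with
          | zero => simp
          | succ k ih => rw [Function.iterate_succ_apply', ih, ← h]
        obtain ⟨k, hk⟩ := hreach a haO b hbO
        rw [hfix k] at hk
        rw [← hk] at hba
        linarith
      · exact h
    have hFb : F b < b := by
      rcases eq_or_lt_of_le hFb_le with h | h
      · exfalso
        have hfix : ∀ k : ℕ, F^[k] b = b := by
          intro k
          induction k with
          | zero => simp
          | succ k ih => rw [Function.iterate_succ_apply', ih, h]
        obtain ⟨k, hk⟩ := hreach b hbO a haO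
        rw [hfix k] at hk
        rw [hk] at hba
        linarith
      · exact h
    have hab : a < b := by linarith
    have htrans : ∀ (y : ℝ) (j : ℤ), F (y + (j:ℝ)) = F y + j := by
      intro y j
      have h1 := F_add_int hdeg j y
      rw [hd1] at h1
      push_cast at h1
      linarith
    have hg : Continuous fun y => F y - y := hF.sub continuous_id
    obtain ⟨z₀, hz₀I, hz₀⟩ : ∃ z ∈ Set.Icc a b, F z - z = 0 := by
      have h0 : (0:ℝ) ∈ Set.Icc (F b - b) (F a - a) := ⟨by linarith, by linarith⟩
      have h1 := intermediate_value_Icc' (le_of_lt hab) hg.continuousOn h0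
      obtain ⟨z, h2, h3⟩ := h1
      exact ⟨z, h2, h3⟩
    have hz₀fix : F z₀ = z₀ := by linarith [hz₀]
    rcases Nat.lt_or_ge m 2 with hm1 | hm2
    · -- m = 1 : a fixed point of f
      have hm1' : m = 1 := by omega
      subst hm1'
      refine ⟨(z₀ : AddCircle (1:ℝ)), ?_, ?_⟩
      · rw [iter_proj hproj]
        simp only [Function.iterate_one]
        rw [hz₀fix]
      · intro i h1 h2
        omega
    · -- m ≥ 2 : find a horseshoe triple
      -- largest fixed point ≤ a
      have hz₁ex : ({z : ℝ | F z = z ∧ z ≤ a}).Nonempty := by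
        refine ⟨z₀ - ((⌈z₀ - a⌉ : ℤ) : ℝ), ?_, ?_⟩
        · have h1 := htrans z₀ (-(⌈z₀ - a⌉ : ℤ))
          push_cast at h1
          rw [hz₀fix] at h1
          have h2 : z₀ - ((⌈z₀ - a⌉ : ℤ) : ℝ) = z₀ + -((⌈z₀ - a⌉ : ℤ) : ℝ) := by ring
          rw [h2]
          exact h1
        · have h1 := Int.le_ceil (z₀ - a)
          show z₀ - ((⌈z₀ - a⌉ : ℤ) : ℝ) ≤ a
          linarith
      have hS₁c : IsClosed {z : ℝ | F z = z ∧ z ≤ a} := by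
        have h1 : {z : ℝ | F z = z ∧ z ≤ a} = {z | F z = z} ∩ Set.Iic a := rfl
        rw [h1]
        exact (isClosed_eq hF continuous_id).inter isClosed_Iic
      have hS₁b : BddAbove {z : ℝ | F z = z ∧ z ≤ a} := ⟨a, fun z hz => hz.2⟩
      set z₁ := sSup {z : ℝ | F z = z ∧ z ≤ a} with hz₁def
      have hz₁mem : z₁ ∈ {z : ℝ | F z = z ∧ z ≤ a} := hS₁c.csSup_mem hz₁ex hS₁b
      have hz₁fix : F z₁ = z₁ := hz₁mem.1
      have hz₁a : z₁ ≤ a := hz₁mem.2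
      have hz₁max : ∀ z, F z = z → z ≤ a → z ≤ z₁ := fun z h1 h2 => le_csSup hS₁b ⟨h1, h2⟩
      have hz₁lt : z₁ < a := by
        rcases eq_or_lt_of_le hz₁a with h | h
        · exfalso; rw [h] at hz₁fix; linarith
        · exact h
      have hup : ∀ y, z₁ < y → y ≤ a → y < F y := by
        intro y hy1 hy2
        by_contra hcon
        push_neg at hcon
        rcases eq_or_lt_of_le hcon with h | h
        · have := hz₁max y h hy2
          linarith
        · have h0 : (0:ℝ) ∈ Set.Icc (F y - y) (F a - a) := ⟨by linarith, by linarith⟩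
          obtain ⟨z, hzI, hz⟩ := intermediate_value_Icc hy2 hg.continuousOn h0
          have hz' : F z - z = 0 := hz
          have h1 : z ≤ z₁ := hz₁max z (by linarith) hzI.2
          linarith [hzI.1]
      by_cases hTne : ({y : ℝ | a ≤ y ∧ F y ≤ z₁}).Nonempty
      · -- T nonempty
        have hTc : IsClosed {y : ℝ | a ≤ y ∧ F y ≤ z₁} := by
          have h1 : {y : ℝ | a ≤ y ∧ F y ≤ z₁} = Set.Ici a ∩ F ⁻¹' (Set.Iic z₁) := rfl
          rw [h1]
          exact isClosed_Ici.inter (isClosed_Iic.preimage hF)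
        have hTb : BddBelow {y : ℝ | a ≤ y ∧ F y ≤ z₁} := ⟨a, fun y hy => hy.1⟩
        set t := sInf {y : ℝ | a ≤ y ∧ F y ≤ z₁} with htdef
        have htmem : t ∈ {y : ℝ | a ≤ y ∧ F y ≤ z₁} := hTc.csInf_mem hTne hTb
        have hat : a ≤ t := htmem.1
        have hFt : F t ≤ z₁ := htmem.2
        have htmin : ∀ y, a ≤ y → y < t → z₁ < F y := by
          intro y h1 h2
          by_contra hcon
          push_neg at hcon
          have h3 : t ≤ y := csInf_le hTb ⟨h1, hcon⟩
          linarith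
        have hat' : a < t := by
          rcases eq_or_lt_of_le hat with h | h
          · exfalso; rw [← h] at hFt; linarith
          · exact h
        by_cases hRne : ∃ c₂, z₁ ≤ c₂ ∧ c₂ ≤ t ∧ t ≤ F c₂
        · -- pattern-B triple (z₁, c₂, t)
          obtain ⟨c₂, hc1, hc2, hc3⟩ := hRne
          have hcl : z₁ < c₂ := by
            rcases eq_or_lt_of_le hc1 with h | h
            · exfalso; rw [← h, hz₁fix] at hc3; linarith
            · exact h
          have hcr : c₂ < t := by
            rcases eq_or_lt_of_le hc2 with h | h
            · exfalso; rw [h] at hc3; linarith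
            · exact h
          exact horseshoe_all_periods hF hproj hd hdeg hcl hcr
            (Or.inr ⟨hc3, le_of_eq hz₁fix, hFt⟩) m hm2
        · push_neg at hRne
          by_cases hwidth : t ≤ z₁ + 1
          · -- trapped orbit, contradiction
            exfalso
            have hinv : ∀ y, z₁ < y → y < t → z₁ < F y ∧ F y < t := by
              intro y h1 h2
              constructor
              · rcases le_or_gt y a with h | h
                · linarith [hup y h1 h]
                · exact htmin y (le_of_lt h) h2
              · exact hRne y (le_of_lt h1) (le_of_lt h2)
            obtain ⟨hb1, hb2⟩ := orbit_trap hinv hz₁lt hat' (hreach a haO b hbO)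
            linarith
          · push_neg at hwidth
            -- t is a "deep dropper" : F t ≤ z₁ < t - 1; now mirrored run
            have hz₂ex : ({z : ℝ | F z = z ∧ b ≤ z}).Nonempty := by
              refine ⟨z₀ + ((⌈b - z₀⌉ : ℤ) : ℝ), ?_, ?_⟩
              · have h1 := htrans z₀ (⌈b - z₀⌉ : ℤ)
                rw [h1, hz₀fix]
              · have h1 := Int.le_ceil (b - z₀)
                show b ≤ z₀ + ((⌈b - z₀⌉ : ℤ) : ℝ)
                linarith
            have hS₂c : IsClosed {z : ℝ | F z = z ∧ b ≤ z} := by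
              have h1 : {z : ℝ | F z = z ∧ b ≤ z} = {z | F z = z} ∩ Set.Ici b := rfl
              rw [h1]
              exact (isClosed_eq hF continuous_id).inter isClosed_Ici
            have hS₂b : BddBelow {z : ℝ | F z = z ∧ b ≤ z} := ⟨b, fun z hz => hz.2⟩
            set z₂ := sInf {z : ℝ | F z = z ∧ b ≤ z} with hz₂def
            have hz₂mem : z₂ ∈ {z : ℝ | F z = z ∧ b ≤ z} := hS₂c.csInf_mem hz₂ex hS₂b
            have hz₂fix : F z₂ = z₂ := hz₂mem.1
            have hz₂b : b ≤ z₂ := hz₂mem.2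
            have hz₂min : ∀ z, F z = z → b ≤ z → z₂ ≤ z := fun z h1 h2 => csInf_le hS₂b ⟨h1, h2⟩
            have hz₂gt : b < z₂ := by
              rcases eq_or_lt_of_le hz₂b with h | h
              · exfalso; rw [← h] at hz₂fix; linarith
              · exact h
            have hdn : ∀ y, b ≤ y → y < z₂ → F y < y := by
              intro y hy1 hy2
              by_contra hcon
              push_neg at hcon
              rcases eq_or_lt_of_le hcon with h | h
              · have := hz₂min y h.symm hy1
                linarith
              · have h0 : (0:ℝ) ∈ Set.Icc (F b - b) (F y - y) := ⟨by linarith, by linarith⟩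
                obtain ⟨z, hzI, hz⟩ := intermediate_value_Icc hy1 hg.continuousOn h0
                have hz' : F z - z = 0 := hz
                have h1 : z₂ ≤ z := hz₂min z (by linarith) hzI.1
                linarith [hzI.2]
            by_cases hT'ne : ({y : ℝ | y ≤ b ∧ z₂ ≤ F y}).Nonempty
            · have hT'c : IsClosed {y : ℝ | y ≤ b ∧ z₂ ≤ F y} := by
                have h1 : {y : ℝ | y ≤ b ∧ z₂ ≤ F y} = Set.Iic b ∩ F ⁻¹' (Set.Ici z₂) := rfl
                rw [h1]
                exact isClosed_Iic.inter (isClosed_Ici.preimage hF)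
              have hT'b : BddAbove {y : ℝ | y ≤ b ∧ z₂ ≤ F y} := ⟨b, fun y hy => hy.1⟩
              set t' := sSup {y : ℝ | y ≤ b ∧ z₂ ≤ F y} with ht'def
              have ht'mem : t' ∈ {y : ℝ | y ≤ b ∧ z₂ ≤ F y} := hT'c.csSup_mem hT'ne hT'b
              have ht'b : t' ≤ b := ht'mem.1
              have hFt' : z₂ ≤ F t' := ht'mem.2
              have htmax' : ∀ y, y ≤ b → t' < y → F y < z₂ := by
                intro y h1 h2
                by_contra hcon
                push_neg at hcon
                have h3 : y ≤ t' := le_csSup hT'b ⟨h1, hcon⟩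
                linarith
              have ht'b' : t' < b := by
                rcases eq_or_lt_of_le ht'b with h | h
                · exfalso; rw [h] at hFt'; linarith
                · exact h
              by_cases hR'ne : ∃ c₂, t' ≤ c₂ ∧ c₂ ≤ z₂ ∧ F c₂ ≤ t'
              · -- pattern-A triple (t', c₂, z₂)
                obtain ⟨c₂, hc1, hc2, hc3⟩ := hR'ne
                have hcl : t' < c₂ := by
                  rcases eq_or_lt_of_le hc1 with h | h
                  · exfalso; rw [← h] at hc3; linarith
                  · exact h
                have hcr : c₂ < z₂ := by
                  rcases eq_or_lt_of_le hc2 with h | h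
                  · exfalso; rw [h, hz₂fix] at hc3; linarith
                  · exact h
                exact horseshoe_all_periods hF hproj hd hdeg hcl hcr
                  (Or.inl ⟨hc3, hFt', le_of_eq hz₂fix.symm⟩) m hm2
              · push_neg at hR'ne
                by_cases hwidth' : z₂ ≤ t' + 1
                · -- trapped orbit, contradiction
                  exfalso
                  have hinv : ∀ y, t' < y → y < z₂ → t' < F y ∧ F y < z₂ := by
                    intro y h1 h2
                    constructor
                    · exact hR'ne y (le_of_lt h1) (le_of_lt h2)
                    · rcases le_or_gt y b with h | h
                      · exact htmax' y h h1
                      · linarith [hdn y (le_of_lt h) h2]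
                  obtain ⟨ha1, ha2⟩ := orbit_trap hinv ht'b' hz₂gt (hreach b hbO a haO)
                  linarith
                · push_neg at hwidth'
                  -- t' is a "deep riser" : F t' ≥ z₂ > t' + 1 ; combine both seeds
                  have hdiff : ∀ j : ℤ, t + (j:ℝ) ≠ t' := by
                    intro j hj
                    have h1 := htrans t j
                    rw [hj] at h1
                    -- h1 : F t' = F t + j ; F t ≤ z₁ ; t' = t + j
                    -- z₂ ≤ F t' = F t + j ≤ z₁ + j < (t - 1) + j = t' - 1 < z₂, contra
                    have h2 : t' - 1 < z₂ := by linarith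
                    have h3 : (j:ℝ) = t' - t := by linarith [hj]
                    nlinarith [hFt, hwidth, hFt', h1, h2, h3]
                  set jj : ℤ := ⌈t' - t⌉ with hjj
                  set s' := t + (jj:ℝ) with hs'def
                  have hs'1 : t' ≤ s' := by
                    have := Int.le_ceil (t' - t)
                    rw [hs'def, hjj]; linarith
                  have hs'2 : s' < t' + 1 := by
                    have := Int.ceil_lt_add_one (t' - t)
                    rw [hs'def, hjj]; linarith
                  have hs'1' : t' < s' := by
                    rcases eq_or_lt_of_le hs'1 with h | h
                    · exact absurd h.symm (hdiff jj)
                    · exact h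
                  have hFs' : F s' = F t + jj := htrans t jj
                  have hp1 : F s' ≤ t' := by
                    rw [hFs']
                    -- F t + jj ≤ z₁ + jj < (t-1) + jj = s' - 1 < t'
                    have h1 : F t + (jj:ℝ) ≤ z₁ + jj := by linarith [hFt]
                    have h2 : z₁ + (jj:ℝ) < t - 1 + jj := by linarith [hwidth]
                    have h3 : t - 1 + (jj:ℝ) = s' - 1 := by rw [hs'def]; ring
                    linarith
                  have hp2 : t' + 1 ≤ F t' := by linarith [hFt', hwidth']
                  have hp3 : t' + 1 ≤ F (t' + 1) := by
                    have h1 : F (t' + ((1:ℤ):ℝ)) = F t' + ((1:ℤ):ℝ) := htrans t' 1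
                    push_cast at h1
                    rw [h1]
                    linarith [hFt', hwidth']
                  exact horseshoe_all_periods hF hproj hd hdeg hs'1' hs'2
                    (Or.inl ⟨hp1, hp2, hp3⟩) m hm2
            · -- T' empty : confinement contradiction
              exfalso
              have hinv : ∀ y, y < z₂ → F y < z₂ := by
                intro y hy
                rcases le_or_gt y b with h | h
                · by_contra hcon
                  push_neg at hcon
                  exact hT'ne ⟨y, h, hcon⟩
                · linarith [hdn y (le_of_lt h) hy]
              have := confine_down htrans hinv (hreach a haO b hbO)
              linarith
      · -- T empty : confinement contradiction
        exfalso
        have hinv : ∀ y, z₁ < y → z₁ < F y := by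
          intro y hy
          rcases le_or_gt y a with h | h
          · linarith [hup y hy h]
          · by_contra hcon
            push_neg at hcon
            exact hTne ⟨y, le_of_lt h, hcon⟩
        have := confine_up htrans hinv (hreach a haO b hbO) (hreach b hbO a haO)
        linarith
end
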